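/- arXiv:1911.04274 — 9 statements merged into one kernel-verified Lean document; each statement's English description precedes it below -/
import Mathlib

section
/- Let (T_{s,t})_{0 ≤ s ≤ t ≤ T} be an evolution system on B, fix 0 < s < T and f ∈ B, and assume f ∈ D(A_u⁺) for every u ∈ [s,T). Then for every t with s < t < T the forward equation holds: the map r ↦ T_{s,r} f has right derivative at r = t equal to T_{s,t}(A_t⁺ f). -/
open Set Filter Topology

/-!
For small `h > 0` the evolution property gives
`T_{s,t+h} f - T_{s,t} f = T_{s,t} (T_{t,t+h} f - f)`, so the right difference quotient of
`r ↦ T_{s,r} f` at `t` is the image under the bounded operator `T_{s,t}` of the quotient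
defining `A_t⁺ f`, and continuity of `T_{s,t}` passes the limit through.
-/

theorem hasDerivWithinAt_Ici_iff_tendsto_slope_zero_right {E : Type*} [NormedAddCommGroup E]
    [NormedSpace ℝ E] {f : ℝ → E} {f' : E} {x : ℝ} :
    HasDerivWithinAt f f' (Ici x) x ↔
      Tendsto (fun h ↦ h⁻¹ • (f (x + h) - f x)) (𝓝[>] 0) (𝓝 f') := by
  rw [← hasDerivWithinAt_Ioi_iff_Ici, hasDerivWithinAt_iff_tendsto_slope' self_notMem_Ioi,
    ← add_zero x, ← map_add_left_nhdsGT, tendsto_map'_iff, add_zero]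
  simp only [Function.comp_def, slope_def_module, add_sub_cancel_left]

theorem forward_equation_right_general
    {B : Type*} [NormedAddCommGroup B] [NormedSpace ℝ B] [CompleteSpace B]
    (T : ℝ) (E : ℝ → ℝ → B →L[ℝ] B)
    (hcomp : ∀ s t u : ℝ, 0 ≤ s → s ≤ t → t ≤ u → u ≤ T →
      ∀ g : B, E s u g = E s t (E t u g))
    (s : ℝ) (hs0 : 0 < s) (f : B) (Af : ℝ → B)
    (hgen : ∀ u ∈ Ico s T,
      Tendsto (fun h : ℝ => h⁻¹ • (E u (u + h) f - f)) (𝓝[>] 0) (𝓝 (Af u))) :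
    ∀ t ∈ Ioo s T, HasDerivWithinAt (fun r => E s r f) (E s t (Af t)) (Ici t) t := by
  rintro t ⟨hst, htT⟩
  rw [hasDerivWithinAt_Ici_iff_tendsto_slope_zero_right]
  have hmapped : Tendsto (fun h : ℝ ↦ E s t (h⁻¹ • (E t (t + h) f - f))) (𝓝[>] 0)
      (𝓝 (E s t (Af t))) :=
    ((E s t).continuous.tendsto _).comp (hgen t ⟨hst.le, htT⟩)
  refine hmapped.congr' ?_
  filter_upwards [Ioo_mem_nhdsGT (sub_pos.2 htT)] with h ⟨hpos, hlt⟩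
  rw [hcomp s t (t + h) hs0.le hst.le (by linarith) (by linarith), map_smul, map_sub]

/-- Forward equation for right generators of an evolution system (Theorem 1.1(2)).
If `f ∈ D(A_u⁺)` for all `u ∈ [s,T)` (with `A_u⁺ f = Af u` given by the defining limit),
then for every `t ∈ (s,T)` the map `r ↦ E s r f` has right derivative `E s t (Af t)` at `t`. -/
theorem forward_equation_right
    {B : Type*} [NormedAddCommGroup B] [NormedSpace ℝ B] [CompleteSpace B]
    (T : ℝ) (E : ℝ → ℝ → B →L[ℝ] B)
    (hid : ∀ s : ℝ, 0 ≤ s → s ≤ T → E s s = ContinuousLinearMap.id ℝ B)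
    (hcomp : ∀ s t u : ℝ, 0 ≤ s → s ≤ t → t ≤ u → u ≤ T →
      ∀ g : B, E s u g = E s t (E t u g))
    (s : ℝ) (hs0 : 0 < s) (hsT : s < T) (f : B) (Af : ℝ → B)
    (hgen : ∀ u ∈ Ico s T,
      Tendsto (fun h : ℝ => h⁻¹ • (E u (u + h) f - f)) (𝓝[>] 0) (𝓝 (Af u))) :
    ∀ t ∈ Ioo s T, HasDerivWithinAt (fun r => E s r f) (E s t (Af t)) (Ici t) t :=
  forward_equation_right_general T E hcomp s hs0 f Af hgen
end

section
/- Let (T_{s,t})_{0 ≤ s ≤ t ≤ T} be a strongly continuous evolution system on B, fix 0 ≤ s ≤ t ≤ T and f ∈ B with f ∈ D(A_u⁺) for every u ∈ [s,t], and assume that the right derivative u ↦ (∂⁺/∂u) T_{s,u} f (which equals T_{s,u} A_u⁺ f by the forward equation) is Bochner integrable on [s,t]. Then T_{s,t} f − f = ∫_s^t T_{s,u} A_u⁺ f du. -/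
open Set Filter Topology MeasureTheory

/-- Integral representation via the forward equation (Theorem 1.1(3), second part,
equation (1.4)).  If `f ∈ D(A_u⁺)` for all `u ∈ [s,t]` (with `A_u⁺ f = Af u` given by
the defining limit) and `u ↦ E s u (Af u)` (the right derivative of `u ↦ E s u f`)
is Bochner integrable on `[s,t]`, then `E s t f - f = ∫_s^t E s u (A_u⁺ f) du`. -/
theorem integral_representation_forward_right
    {B : Type*} [NormedAddCommGroup B] [NormedSpace ℝ B] [CompleteSpace B]
    (T : ℝ) (E : ℝ → ℝ → B →L[ℝ] B)
    (hid : ∀ s : ℝ, 0 ≤ s → s ≤ T → E s s = ContinuousLinearMap.id ℝ B)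
    (hcomp : ∀ s t u : ℝ, 0 ≤ s → s ≤ t → t ≤ u → u ≤ T →
      ∀ g : B, E s u g = E s t (E t u g))
    (hcont : ∀ g : B, ContinuousOn (fun p : ℝ × ℝ => E p.1 p.2 g)
      {p : ℝ × ℝ | 0 ≤ p.1 ∧ p.1 ≤ p.2 ∧ p.2 ≤ T})
    (s t : ℝ) (hs0 : 0 ≤ s) (hst : s ≤ t) (htT : t ≤ T) (f : B) (Af : ℝ → B)
    (hgen : ∀ u ∈ Icc s t,
      Tendsto (fun h : ℝ => h⁻¹ • (E u (u + h) f - f)) (𝓝[>] 0) (𝓝 (Af u)))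
    (hint : IntervalIntegrable (fun u => E s u (Af u)) volume s t) :
    E s t f - f = ∫ u in s..t, E s u (Af u) := by
  set g : ℝ → B := fun u => E s u f with hg
  have hgs : g s = f := by simp [hg, hid s hs0 (hst.trans htT)]
  have hcontg : ContinuousOn g (Icc s t) := by
    have hmap : ∀ u ∈ Icc s t, ((s, u) : ℝ × ℝ) ∈
        {p : ℝ × ℝ | 0 ≤ p.1 ∧ p.1 ≤ p.2 ∧ p.2 ≤ T} :=
      fun u hu => ⟨hs0, hu.1, hu.2.trans htT⟩
    exact (hcont f).comp
      ((Continuous.prodMk_right s).continuousOn : ContinuousOn (fun u : ℝ => ((s, u) : ℝ × ℝ)) _)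
      hmap
  have hderiv : ∀ u ∈ Ioo s t, HasDerivWithinAt g (E s u (Af u)) (Ioi u) u := by
    intro u hu
    rw [hasDerivWithinAt_iff_tendsto_slope]
    have hdiff : Ioi u \ {u} = Ioi u := by
      rw [Set.diff_singleton_eq_self]; simp
    rw [hdiff]
    have h1 : Tendsto (fun v : ℝ => v - u) (𝓝[>] u) (𝓝[>] (0 : ℝ)) := by
      apply tendsto_nhdsWithin_of_tendsto_nhds_of_eventually_within
      · have : Tendsto (fun v : ℝ => v - u) (𝓝 u) (𝓝 (u - u)) :=
          (continuous_id.sub continuous_const).tendsto u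
        simpa using this.mono_left nhdsWithin_le_nhds
      · filter_upwards [self_mem_nhdsWithin] with v hv
        exact sub_pos.2 (Set.mem_Ioi.mp hv)
    have h2 : Tendsto (fun v : ℝ => (v - u)⁻¹ • (E u v f - f)) (𝓝[>] u) (𝓝 (Af u)) := by
      have h0 := (hgen u ⟨hu.1.le, hu.2.le⟩).comp h1
      refine h0.congr fun v => ?_
      simp
    have h3 : Tendsto (fun v : ℝ => E s u ((v - u)⁻¹ • (E u v f - f)))
        (𝓝[>] u) (𝓝 (E s u (Af u))) :=
      ((E s u).continuous.tendsto _).comp h2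
    refine h3.congr' ?_
    filter_upwards [Ioo_mem_nhdsGT_of_mem ⟨le_refl u, hu.2⟩] with v hv
    have hEv : E s v f = E s u (E u v f) :=
      hcomp s u v hs0 hu.1.le hv.1.le (hv.2.le.trans htT) f
    rw [slope_def_module]
    simp only [hg, hEv]
    rw [(E s u).map_smul, (E s u).map_sub]
  have key := intervalIntegral.integral_eq_sub_of_hasDeriv_right_of_le hst hcontg hderiv hint
  rw [key, hgs]
end

section
/- Let (T_{s,t})_{0 ≤ s ≤ t ≤ T} be an evolution system on B such that for each fixed t the map s ↦ T_{s,t} f is norm continuous for every f ∈ B, fix 0 < s < t ≤ T and f ∈ B, and assume that u ↦ T_{u,t} f is left-differentiable at every u ∈ (0,t) (so that, by the backward equation for left generators, T_{u,t} f ∈ D(A_u⁻) with A_u⁻ T_{u,t} f equal to minus the left derivative) and that the left derivative u ↦ (∂⁻/∂u) T_{u,t} f is Bochner integrable on [s,t]. Then T_{s,t} f − f = ∫_s^t A_u⁻ T_{u,t} f du. -/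
open Set Filter Topology MeasureTheory

/-- Integral representation via the backward equation for left generators
(Theorem 1.2(2)).  Assume that for each fixed `t'` the map `s ↦ E s t' g` is norm
continuous for every `g ∈ B`.  If `u ↦ E u t f` is left-differentiable on `(0,t)`
with left derivative `d u` (so that by the backward equation for left generators
`A_u⁻ (E u t f) = -(d u)`), and `d` is Bochner integrable on `[s,t]`, then
`E s t f - f = ∫_s^t A_u⁻ (E u t f) du = ∫_s^t -(d u) du`. -/
theorem integral_representation_backward_left
    {B : Type*} [NormedAddCommGroup B] [NormedSpace ℝ B] [CompleteSpace B]
    (T : ℝ) (E : ℝ → ℝ → B →L[ℝ] B)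
    (hid : ∀ s : ℝ, 0 ≤ s → s ≤ T → E s s = ContinuousLinearMap.id ℝ B)
    (hcomp : ∀ s t u : ℝ, 0 ≤ s → s ≤ t → t ≤ u → u ≤ T →
      ∀ g : B, E s u g = E s t (E t u g))
    (hconts : ∀ t' : ℝ, 0 ≤ t' → t' ≤ T → ∀ g : B,
      ContinuousOn (fun s => E s t' g) (Icc 0 t'))
    (s t : ℝ) (hs0 : 0 < s) (hst : s < t) (htT : t ≤ T) (f : B) (d : ℝ → B)
    (hdiff : ∀ u ∈ Ioo (0:ℝ) t, HasDerivWithinAt (fun r => E r t f) (d u) (Iic u) u)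
    (hint : IntervalIntegrable d volume s t) :
    E s t f - f = ∫ u in s..t, -(d u) := by
  set g : ℝ → B := fun u => E u t f with hg
  have h0t : (0:ℝ) ≤ t := le_trans hs0.le hst.le
  -- FTC applied to x ↦ g (-x) on [-t, -s]
  have hcont' : ContinuousOn (fun x => g (-x)) (Icc (-t) (-s)) := by
    apply (hconts t h0t htT f).comp continuousOn_neg
    intro x hx
    exact ⟨neg_nonneg.2 (le_trans hx.2 (neg_nonpos.2 hs0.le)),
      le_of_neg_le_neg (by simpa using hx.1)⟩
  have hderiv' : ∀ x ∈ Ioo (-t) (-s),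
      HasDerivWithinAt (fun x => g (-x)) (-(d (-x))) (Ioi x) x := by
    intro x hx
    have hx' : -x ∈ Ioo (0:ℝ) t :=
      ⟨lt_of_lt_of_le (by linarith [hx.2]) (le_refl _), by linarith [hx.1]⟩
    have hmem : MapsTo Neg.neg (Ioi x) (Iic (-x)) := by
      intro y hy; simp only [mem_Iic]; exact neg_le_neg hy.le
    have := HasDerivWithinAt.scomp x (hdiff (-x) hx')
      ((hasDerivAt_neg x).hasDerivWithinAt) hmem
    simpa [neg_one_smul, Function.comp_def] using this
  have hint' : IntervalIntegrable (fun x => -(d (-x))) volume (-t) (-s) :=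
    ((IntervalIntegrable.iff_comp_neg (a := s) (b := t) (f := fun u => -(d u))).mp hint.neg).symm
  have key := intervalIntegral.integral_eq_sub_of_hasDeriv_right_of_le
    (by linarith : -t ≤ -s) hcont' hderiv' hint'
  have hgt : g t = f := by simp [hg, hid t h0t htT]
  have : (∫ x in (-t)..(-s), -(d (-x))) = ∫ u in s..t, -(d u) := by
    have := intervalIntegral.integral_comp_neg (a := -t) (b := -s)
      (f := fun u => -(d u))
    simpa using this
  rw [← this, key]
  simp [hgt, hg, hid t h0t htT]
end

section
/- Let (T_{s,t})_{0 ≤ s ≤ t ≤ T} be a strongly continuous evolution system on B and fix 0 ≤ s ≤ t ≤ T. Let u : [s,t] → B be continuous and G : [s,t] → B be such that (i) r ↦ T_{s,r} G(r) is Bochner integrable on [s,t], and (ii) for every r ∈ (s,t), u(r) ∈ D(A_r⁺) and u has right derivative −A_r⁺ u(r) + G(r) at r (i.e., u is a classical solution of the inhomogeneous right evolution problem ∂⁺/∂r u(r) = −A_r⁺ u(r) + G(r)). Then u(s) = T_{s,t} u(t) − ∫_s^t T_{s,r} G(r) dr. -/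
open Set Filter Topology MeasureTheory

lemma evol_unif_bound {B : Type*} [NormedAddCommGroup B] [NormedSpace ℝ B] [CompleteSpace B]
    (E : ℝ → ℝ → B →L[ℝ] B) (a b : ℝ)
    (hc : ∀ x : B, ContinuousOn (fun r => E a r x) (Icc a b)) :
    ∃ C : ℝ, 0 ≤ C ∧ ∀ r ∈ Icc a b, ‖E a r‖ ≤ C := by
  have hpt : ∀ x : B, ∃ C, ∀ r : Icc a b, ‖E a (r : ℝ) x‖ ≤ C := by
    intro x
    obtain ⟨C, hC⟩ := isCompact_Icc.exists_bound_of_continuousOn (hc x)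
    exact ⟨C, fun r => hC r r.2⟩
  obtain ⟨C, hC⟩ := banach_steinhaus (g := fun r : Icc a b => E a (r : ℝ)) hpt
  exact ⟨max C 0, le_max_right _ _, fun r hr => (hC ⟨r, hr⟩).trans (le_max_left _ _)⟩

/-- Representation of classical solutions of the inhomogeneous right evolution
problem (Theorem 1.3).  If `u` is continuous on `[s,t]`, `r ↦ E s r (G r)` is Bochner
integrable on `[s,t]`, and for every `r ∈ (s,t)` the vector `u r` lies in `D(A_r⁺)`
(with value `a` given by the defining limit) and `u` has right derivative `-a + G r`
at `r`, then `u s = E s t (u t) - ∫_s^t E s r (G r) dr`. -/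
theorem representation_inhomogeneous_right_evolution_problem
    {B : Type*} [NormedAddCommGroup B] [NormedSpace ℝ B] [CompleteSpace B]
    (T : ℝ) (E : ℝ → ℝ → B →L[ℝ] B)
    (hid : ∀ s : ℝ, 0 ≤ s → s ≤ T → E s s = ContinuousLinearMap.id ℝ B)
    (hcomp : ∀ s t u : ℝ, 0 ≤ s → s ≤ t → t ≤ u → u ≤ T →
      ∀ g : B, E s u g = E s t (E t u g))
    (hcont : ∀ g : B, ContinuousOn (fun p : ℝ × ℝ => E p.1 p.2 g)
      {p : ℝ × ℝ | 0 ≤ p.1 ∧ p.1 ≤ p.2 ∧ p.2 ≤ T})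
    (s t : ℝ) (hs0 : 0 ≤ s) (hst : s ≤ t) (htT : t ≤ T)
    (u G : ℝ → B)
    (hu : ContinuousOn u (Icc s t))
    (hG : IntervalIntegrable (fun r => E s r (G r)) volume s t)
    (hsol : ∀ r ∈ Ioo s t, ∃ a : B,
      Tendsto (fun h : ℝ => h⁻¹ • (E r (r + h) (u r) - u r)) (𝓝[>] 0) (𝓝 a) ∧
      HasDerivWithinAt u (-a + G r) (Ici r) r) :
    u s = E s t (u t) - ∫ r in s..t, E s r (G r) := by
  set F : ℝ → B := fun r => E s r (u r) with hF
  -- strong continuity of r ↦ E a r x on [a, t]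
  have hEcont : ∀ a : ℝ, 0 ≤ a → a ≤ t → ∀ x : B,
      ContinuousOn (fun r => E a r x) (Icc a t) := by
    intro a ha0 hat x
    have : ContinuousOn ((fun p : ℝ × ℝ => E p.1 p.2 x) ∘ fun r => (a, r)) (Icc a t) := by
      apply (hcont x).comp (Continuous.continuousOn (by continuity))
      intro r hr
      exact ⟨ha0, hr.1, hr.2.trans htT⟩
    exact this
  -- continuity of F
  obtain ⟨C, hC0, hC⟩ := evol_unif_bound E s t (hEcont s hs0 hst)
  have hFcont : ContinuousOn F (Icc s t) := by
    intro r0 hr0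
    have h1 : Tendsto (fun r => ‖u r - u r0‖) (𝓝[Icc s t] r0) (𝓝 0) := by
      have h := ((hu r0 hr0).sub (continuousWithinAt_const (b := u r0))).norm
      have h' : Tendsto (fun r => ‖u r - u r0‖) (𝓝[Icc s t] r0) (𝓝 ‖u r0 - u r0‖) := h
      simpa using h'
    have h2 : Tendsto (fun r => ‖E s r (u r0) - E s r0 (u r0)‖) (𝓝[Icc s t] r0) (𝓝 0) := by
      have h := ((hEcont s hs0 hst (u r0) r0 hr0).sub
        (continuousWithinAt_const (b := E s r0 (u r0)))).norm
      have h' : Tendsto (fun r => ‖E s r (u r0) - E s r0 (u r0)‖) (𝓝[Icc s t] r0)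
        (𝓝 ‖E s r0 (u r0) - E s r0 (u r0)‖) := h
      simpa using h'
    have key : Tendsto (fun r => ‖F r - F r0‖) (𝓝[Icc s t] r0) (𝓝 0) := by
      apply squeeze_zero' (Eventually.of_forall fun r => norm_nonneg _) _
        (by simpa using ((h1.const_mul C).add h2))
      filter_upwards [self_mem_nhdsWithin] with r hr
      have e1 : F r - F r0 = E s r (u r - u r0) + (E s r (u r0) - E s r0 (u r0)) := by
        show E s r (u r) - E s r0 (u r0) = _
        rw [map_sub]; abel
      rw [e1]
      refine (norm_add_le _ _).trans (add_le_add ?_ le_rfl)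
      calc ‖E s r (u r - u r0)‖ ≤ ‖E s r‖ * ‖u r - u r0‖ := (E s r).le_opNorm _
        _ ≤ C * ‖u r - u r0‖ := mul_le_mul_of_nonneg_right (hC r hr) (norm_nonneg _)
    have := tendsto_iff_norm_sub_tendsto_zero.2 key
    exact this
  -- right derivative of F
  have hFderiv : ∀ r ∈ Ioo s t, HasDerivWithinAt F (E s r (G r)) (Ioi r) r := by
    intro r hr
    obtain ⟨a, ha, hu'⟩ := hsol r hr
    have hr0 : (0:ℝ) ≤ r := hs0.trans hr.1.le
    have hrt : r ≤ t := hr.2.le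
    obtain ⟨D, hD0, hD⟩ := evol_unif_bound E r t (hEcont r hr0 hrt)
    have hsmall : Ioc (0:ℝ) (t - r) ∈ 𝓝[>] (0:ℝ) :=
      Ioc_mem_nhdsGT_of_mem ⟨le_refl 0, by linarith [hr.2]⟩
    have htrans2 : Tendsto (fun h : ℝ => r + h) (𝓝[>] (0:ℝ)) (𝓝[Icc r t] r) := by
      apply tendsto_nhdsWithin_of_tendsto_nhds_of_eventually_within
      · have : Tendsto (fun h : ℝ => r + h) (𝓝 0) (𝓝 r) := by
          simpa using (continuous_add_left r).tendsto (0:ℝ)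
        exact this.mono_left nhdsWithin_le_nhds
      · filter_upwards [hsmall] with h hh
        exact ⟨by linarith [hh.1], by linarith [hh.2]⟩
    -- right derivative of u as a limit over h → 0⁺
    set v : B := -a + G r with hv
    have hw : Tendsto (fun h : ℝ => h⁻¹ • (u (r + h) - u r)) (𝓝[>] (0:ℝ)) (𝓝 v) := by
      have hslope : Tendsto (slope u r) (𝓝[>] r) (𝓝 v) := by
        have := hasDerivWithinAt_iff_tendsto_slope.1 hu'
        rwa [show Ici r \ {r} = Ioi r by rw [Ici_sdiff_left]] at this
      have htrans : Tendsto (fun h : ℝ => r + h) (𝓝[>] (0:ℝ)) (𝓝[>] r) := by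
        apply tendsto_nhdsWithin_of_tendsto_nhds_of_eventually_within
        · have : Tendsto (fun h : ℝ => r + h) (𝓝 0) (𝓝 r) := by
            simpa using (continuous_add_left r).tendsto (0:ℝ)
          exact this.mono_left nhdsWithin_le_nhds
        · filter_upwards [self_mem_nhdsWithin] with h hh
          exact by simpa using (hh : (0:ℝ) < h)
      have := hslope.comp htrans
      refine this.congr fun h => ?_
      simp [slope, vsub_eq_sub]
    -- term A : E r (r+h) applied to difference quotient tends to v
    have hA : Tendsto (fun h : ℝ => E r (r + h) (h⁻¹ • (u (r + h) - u r)))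
        (𝓝[>] (0:ℝ)) (𝓝 v) := by
      rw [tendsto_iff_norm_sub_tendsto_zero]
      have hsecond : Tendsto (fun h : ℝ => ‖E r (r + h) v - v‖) (𝓝[>] (0:ℝ)) (𝓝 0) := by
        have hc := (hEcont r hr0 hrt v r (left_mem_Icc.2 hrt))
        have := (hc.tendsto.comp htrans2)
        have h0 : E r r v = v := by rw [hid r hr0 (hrt.trans htT)]; rfl
        rw [h0] at this
        simpa using (this.sub (tendsto_const_nhds (x := v))).norm
      have hfirst : Tendsto (fun h : ℝ => D * ‖h⁻¹ • (u (r + h) - u r) - v‖)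
          (𝓝[>] (0:ℝ)) (𝓝 0) := by
        have := (tendsto_iff_norm_sub_tendsto_zero.1 hw).const_mul D
        simpa using this
      apply squeeze_zero' (Eventually.of_forall fun h => norm_nonneg _) _
        (by simpa using hfirst.add hsecond)
      filter_upwards [hsmall] with h hh
      have hmem : r + h ∈ Icc r t := ⟨by linarith [hh.1], by linarith [hh.2]⟩
      have e1 : E r (r + h) (h⁻¹ • (u (r + h) - u r)) - v
          = E r (r + h) (h⁻¹ • (u (r + h) - u r) - v) + (E r (r + h) v - v) := by
        rw [map_sub]; abel
      rw [e1]
      refine (norm_add_le _ _).trans (add_le_add ?_ le_rfl)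
      calc ‖E r (r + h) (h⁻¹ • (u (r + h) - u r) - v)‖
          ≤ ‖E r (r + h)‖ * ‖h⁻¹ • (u (r + h) - u r) - v‖ := (E r (r + h)).le_opNorm _
        _ ≤ D * ‖h⁻¹ • (u (r + h) - u r) - v‖ :=
            mul_le_mul_of_nonneg_right (hD _ hmem) (norm_nonneg _)
    -- sum tends to G r
    have hsum : Tendsto (fun h : ℝ => E r (r + h) (h⁻¹ • (u (r + h) - u r))
        + h⁻¹ • (E r (r + h) (u r) - u r)) (𝓝[>] (0:ℝ)) (𝓝 (G r)) := by
      have := hA.add ha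
      rwa [show v + a = G r by rw [hv]; abel] at this
    have happ : Tendsto (fun h : ℝ => E s r (E r (r + h) (h⁻¹ • (u (r + h) - u r))
        + h⁻¹ • (E r (r + h) (u r) - u r))) (𝓝[>] (0:ℝ)) (𝓝 (E s r (G r))) :=
      ((E s r).continuous.tendsto _).comp hsum
    have hquot : Tendsto (fun h : ℝ => h⁻¹ • (F (r + h) - F r)) (𝓝[>] (0:ℝ))
        (𝓝 (E s r (G r))) := by
      apply happ.congr'
      filter_upwards [hsmall] with h hh
      have hcomp1 : E s (r + h) (u (r + h)) = E s r (E r (r + h) (u (r + h))) :=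
        hcomp s r (r + h) hs0 hr.1.le (by linarith [hh.1]) (by linarith [hh.2]) _
      have e2 : E r (r + h) (h⁻¹ • (u (r + h) - u r)) + h⁻¹ • (E r (r + h) (u r) - u r)
          = h⁻¹ • (E r (r + h) (u (r + h)) - u r) := by
        rw [(E r (r + h)).map_smul, map_sub]
        module
      rw [e2, (E s r).map_smul, map_sub, ← hcomp1]
    rw [hasDerivWithinAt_iff_tendsto_slope,
      show Ioi r \ {r} = Ioi r by exact diff_singleton_eq_self (fun h => lt_irrefl r h)]
    have htr : Tendsto (fun y : ℝ => y - r) (𝓝[>] r) (𝓝[>] (0:ℝ)) := by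
      apply tendsto_nhdsWithin_of_tendsto_nhds_of_eventually_within
      · have : Tendsto (fun y : ℝ => y - r) (𝓝 r) (𝓝 0) := by
          simpa using (continuous_sub_right r).tendsto r
        exact this.mono_left nhdsWithin_le_nhds
      · filter_upwards [self_mem_nhdsWithin] with y hy
        simpa using (hy : r < y)
    refine (hquot.comp htr).congr fun y => ?_
    simp [slope, vsub_eq_sub]
  have key := intervalIntegral.integral_eq_sub_of_hasDeriv_right_of_le hst hFcont hFderiv hG
  have hFs : F s = u s := by
    simp only [hF]
    rw [hid s hs0 (hst.trans htT)]
    rfl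
  have hFt : F t = E s t (u t) := rfl
  rw [key, hFt, hFs]
  abel
end

section
/- Let (T^X_{s,t})_{0 ≤ s ≤ t ≤ T} and (T^Y_{s,t})_{0 ≤ s ≤ t ≤ T} be strongly continuous evolution systems on the Banach lattice B, with (T^Y_{s,t}) positivity preserving (g ≥ 0 implies T^Y_{s,r} g ≥ 0). Fix t ∈ (0,T] and f ∈ B and assume for all 0 < s < t: (i) the maps s ↦ T^X_{s,t} f and s ↦ T^Y_{s,t} f are right-differentiable at s (so that, by the backward equation, A^{X+}_s T^X_{s,t} f and A^{Y+}_s T^Y_{s,t} f exist); (ii) T^X_{s,t} f ∈ D(A^{Y+}_s); (iii) r ↦ T^Y_{s,r}((A^{X+}_r − A^{Y+}_r) T^X_{r,t} f) is Bochner integrable on [s,t]; (iv) A^{X+}_s T^X_{s,t} f ≤ A^{Y+}_s T^X_{s,t} f in the order of B. Then T^X_{s,t} f ≤ T^Y_{s,t} f for all 0 ≤ s ≤ t. -/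
open Set Filter Topology MeasureTheory

section CRGAux

variable {B : Type*} [NormedAddCommGroup B] [Lattice B] [HasSolidNorm B] [IsOrderedAddMonoid B]
    [NormedSpace ℝ B]

lemma CRG_smul_nonneg {x : B} (hx : 0 ≤ x) : ∀ {c : ℝ}, 0 ≤ c → 0 ≤ c • x := by
  have hA : ∀ (k : ℕ) (y : B), 0 ≤ ((2:ℝ)^k) • y → 0 ≤ y := by
    intro k
    induction k with
    | zero => intro y hy; simpa using hy
    | succ k ih =>
      intro y hy
      have h2 : 0 ≤ (2:ℝ) • y := by
        apply ih
        have h' : ((2:ℝ)^k) • ((2:ℝ) • y) = ((2:ℝ)^(k+1)) • y := by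
          rw [smul_smul, pow_succ]
        rwa [h']
      have h2' : 0 ≤ (2:ℕ) • y := by
        rwa [← Nat.cast_smul_eq_nsmul ℝ]
      exact nsmul_two_semiclosed h2'
  have hB : ∀ n : ℕ, 0 ≤ ((n:ℝ)) • x := fun n => by
    rw [Nat.cast_smul_eq_nsmul]; exact nsmul_nonneg hx n
  have hC : ∀ (n k : ℕ), 0 ≤ ((n:ℝ) / 2^k) • x := by
    intro n k
    apply hA k
    rw [smul_smul]
    have h' : (2:ℝ)^k * ((n:ℝ)/2^k) = (n:ℝ) := by
      field_simp
    rw [h']; exact hB n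
  intro c hc
  have hseq : Tendsto (fun k : ℕ => ((⌊c * 2^k⌋₊ : ℝ) / 2^k : ℝ)) atTop (𝓝 c) := by
    have h2k : ∀ k : ℕ, (0:ℝ) < 2^k := fun k => by positivity
    have hle : ∀ k : ℕ, c - (1/2)^k ≤ (⌊c * 2^k⌋₊ : ℝ) / 2^k := by
      intro k
      rw [sub_le_iff_le_add, div_add' _ _ _ (h2k k).ne', le_div_iff₀ (h2k k)]
      have := Nat.lt_floor_add_one (c * 2^k)
      have h1 : (1/2:ℝ)^k * 2^k = 1 := by
        rw [← mul_pow]; norm_num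
      nlinarith [this, h1]
    have hge : ∀ k : ℕ, ((⌊c * 2^k⌋₊ : ℝ) / 2^k) ≤ c := by
      intro k
      rw [div_le_iff₀ (h2k k)]
      exact Nat.floor_le (by positivity)
    have hlo : Tendsto (fun k : ℕ => c - (1/2:ℝ)^k) atTop (𝓝 c) := by
      have : Tendsto (fun k : ℕ => ((1:ℝ)/2)^k) atTop (𝓝 0) := by
        apply tendsto_pow_atTop_nhds_zero_of_lt_one <;> norm_num
      simpa using tendsto_const_nhds.sub this
    exact tendsto_of_tendsto_of_tendsto_of_le_of_le hlo tendsto_const_nhds hle hge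
  have hlim : Tendsto (fun k : ℕ => ((⌊c * 2^k⌋₊ : ℝ) / 2^k) • x) atTop (𝓝 (c • x)) :=
    hseq.smul_const x
  exact le_of_tendsto_of_tendsto' tendsto_const_nhds hlim fun k => hC _ _

lemma CRG_integral_nonneg [CompleteSpace B] {φ : ℝ → B} {a b : ℝ} (hab : a < b)
    (hi : IntervalIntegrable φ volume a b) (h : ∀ r ∈ Ioo a b, (0:B) ≤ φ r) :
    0 ≤ ∫ r in a..b, φ r := by
  have hconv : Convex ℝ {x : B | 0 ≤ x} := fun x hx y hy p q hp hq _ =>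
    add_nonneg (CRG_smul_nonneg hx hp) (CRG_smul_nonneg hy hq)
  have hcl : IsClosed {x : B | 0 ≤ x} := isClosed_Ici
  have h0 : volume (Ioc a b) ≠ 0 := by
    rw [Real.volume_Ioc]
    exact (ENNReal.ofReal_pos.2 (sub_pos.2 hab)).ne'
  have hfin : volume (Ioc a b) ≠ ⊤ := by
    rw [Real.volume_Ioc]; exact ENNReal.ofReal_ne_top
  have hio : IntegrableOn φ (Ioc a b) volume :=
    (intervalIntegrable_iff_integrableOn_Ioc_of_le hab.le).1 hi
  have hae : ∀ᵐ x ∂volume.restrict (Ioc a b), φ x ∈ {x : B | 0 ≤ x} := by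
    rw [← Measure.restrict_congr_set Ioo_ae_eq_Ioc]
    exact (ae_restrict_iff' measurableSet_Ioo).2 (Eventually.of_forall h)
  have havg := hconv.set_average_mem hcl h0 hfin hae hio
  rw [intervalIntegral.integral_of_le hab.le]
  have heq : (∫ r in Ioc a b, φ r) = (volume (Ioc a b)).toReal • ⨍ r in Ioc a b, φ r := by
    rw [setAverage_eq, smul_smul, measureReal_def, mul_inv_cancel₀, one_smul]
    exact ENNReal.toReal_ne_zero.2 ⟨h0, hfin⟩
  rw [heq]
  exact CRG_smul_nonneg havg ENNReal.toReal_nonneg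

lemma CRG_bound [CompleteSpace B] (E : ℝ → ℝ → B →L[ℝ] B) {K : Set (ℝ × ℝ)}
    (hK : IsCompact K) (hcont : ∀ g : B, ContinuousOn (fun p : ℝ × ℝ => E p.1 p.2 g) K) :
    ∃ C : ℝ, 0 ≤ C ∧ ∀ p ∈ K, ‖E p.1 p.2‖ ≤ C := by
  have hpt : ∀ x : B, ∃ C, ∀ i : K, ‖E i.1.1 i.1.2 x‖ ≤ C := by
    intro x
    have hcomp : IsCompact ((fun p : ℝ × ℝ => ‖E p.1 p.2 x‖) '' K) :=
      hK.image_of_continuousOn (hcont x).norm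
    obtain ⟨C, hC⟩ := hcomp.bddAbove
    exact ⟨C, fun i => hC (mem_image_of_mem _ i.2)⟩
  obtain ⟨C, hC⟩ := banach_steinhaus (g := fun i : K => E i.1.1 i.1.2) hpt
  exact ⟨max C 0, le_max_right _ _, fun p hp => le_trans (hC ⟨p, hp⟩) (le_max_left _ _)⟩

lemma CRG_hasDerivWithinAt_Ioi_iff {g : ℝ → B} {r : ℝ} {v : B} :
    HasDerivWithinAt g v (Ioi r) r ↔
      Tendsto (fun h : ℝ => h⁻¹ • (g (r + h) - g r)) (𝓝[>] (0:ℝ)) (𝓝 v) := by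
  rw [hasDerivWithinAt_iff_tendsto_slope,
    Set.diff_singleton_eq_self (by simp : r ∉ Ioi r)]
  constructor
  · intro H
    have hmap : Tendsto (fun h : ℝ => r + h) (𝓝[>] (0:ℝ)) (𝓝[>] r) := by
      rw [tendsto_nhdsWithin_iff]
      refine ⟨?_, ?_⟩
      · have h' : Tendsto (fun h : ℝ => r + h) (𝓝 (0:ℝ)) (𝓝 r) := by
          simpa using (continuous_add_left r).tendsto (0:ℝ)
        exact h'.mono_left nhdsWithin_le_nhds
      · filter_upwards [self_mem_nhdsWithin] with h hh
        exact lt_add_of_pos_right r hh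
    refine (H.comp hmap).congr fun h => ?_
    simp [Function.comp, slope_def_module, add_sub_cancel_left]
  · intro H
    have hmap : Tendsto (fun x : ℝ => x - r) (𝓝[>] r) (𝓝[>] (0:ℝ)) := by
      rw [tendsto_nhdsWithin_iff]
      refine ⟨?_, ?_⟩
      · have h' : Tendsto (fun x : ℝ => x - r) (𝓝 r) (𝓝 (0:ℝ)) := by
          simpa using (continuous_sub_right r).tendsto r
        exact h'.mono_left nhdsWithin_le_nhds
      · filter_upwards [self_mem_nhdsWithin] with x hx
        exact sub_pos.2 (show r < x from hx)
    refine (H.comp hmap).congr fun x => ?_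
    simp [Function.comp, slope_def_module, add_sub_cancel]

end CRGAux

/-- Comparison of evolution systems via right generators (Theorem 1.4), for a single
function `f` in a Banach lattice `B`.  Under right-differentiability of `s ↦ EX s t f`
and `s ↦ EY s t f` (so that by the backward equation `A^{X+}_s (EX s t f) = -(dX s)` and
`A^{Y+}_s (EY s t f) = -(dY s)`), membership `EX s t f ∈ D(A^{Y+}_s)` with value `aY s`,
integrability of `r ↦ EY s r ((A^{X+}_r - A^{Y+}_r)(EX r t f)) = EY s r (-(dX r) - aY r)`,
the generator comparison `A^{X+}_s (EX s t f) ≤ A^{Y+}_s (EX s t f)`, i.e. `-(dX s) ≤ aY s`,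
and positivity of `EY`, one has `EX s t f ≤ EY s t f` for all `0 ≤ s ≤ t`. -/
theorem comparison_right_generators
    {B : Type*} [NormedAddCommGroup B] [Lattice B] [HasSolidNorm B] [IsOrderedAddMonoid B]
    [NormedSpace ℝ B] [CompleteSpace B]
    (T : ℝ) (EX EY : ℝ → ℝ → B →L[ℝ] B)
    (hidX : ∀ s : ℝ, 0 ≤ s → s ≤ T → EX s s = ContinuousLinearMap.id ℝ B)
    (hcompX : ∀ s t u : ℝ, 0 ≤ s → s ≤ t → t ≤ u → u ≤ T →
      ∀ g : B, EX s u g = EX s t (EX t u g))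
    (hcontX : ∀ g : B, ContinuousOn (fun p : ℝ × ℝ => EX p.1 p.2 g)
      {p : ℝ × ℝ | 0 ≤ p.1 ∧ p.1 ≤ p.2 ∧ p.2 ≤ T})
    (hidY : ∀ s : ℝ, 0 ≤ s → s ≤ T → EY s s = ContinuousLinearMap.id ℝ B)
    (hcompY : ∀ s t u : ℝ, 0 ≤ s → s ≤ t → t ≤ u → u ≤ T →
      ∀ g : B, EY s u g = EY s t (EY t u g))
    (hcontY : ∀ g : B, ContinuousOn (fun p : ℝ × ℝ => EY p.1 p.2 g)
      {p : ℝ × ℝ | 0 ≤ p.1 ∧ p.1 ≤ p.2 ∧ p.2 ≤ T})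
    (hpos : ∀ s r : ℝ, 0 ≤ s → s ≤ r → r ≤ T → ∀ g : B, 0 ≤ g → 0 ≤ EY s r g)
    (t : ℝ) (ht0 : 0 < t) (htT : t ≤ T) (f : B)
    (dX dY aY : ℝ → B)
    (hdiffX : ∀ s ∈ Ioo (0:ℝ) t, HasDerivWithinAt (fun r => EX r t f) (dX s) (Ici s) s)
    (hdiffY : ∀ s ∈ Ioo (0:ℝ) t, HasDerivWithinAt (fun r => EY r t f) (dY s) (Ici s) s)
    (hdom : ∀ s ∈ Ioo (0:ℝ) t,
      Tendsto (fun h : ℝ => h⁻¹ • (EY s (s + h) (EX s t f) - EX s t f))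
        (𝓝[>] 0) (𝓝 (aY s)))
    (hint : ∀ s ∈ Ioo (0:ℝ) t,
      IntervalIntegrable (fun r => EY s r (-(dX r) - aY r)) volume s t)
    (hord : ∀ s ∈ Ioo (0:ℝ) t, -(dX s) ≤ aY s) :
    ∀ s : ℝ, 0 ≤ s → s ≤ t → EX s t f ≤ EY s t f := by
  set S : Set (ℝ × ℝ) := {p : ℝ × ℝ | 0 ≤ p.1 ∧ p.1 ≤ p.2 ∧ p.2 ≤ T} with hS
  set u : ℝ → B := fun r => EX r t f with hu
  have key : ∀ s ∈ Ioo (0:ℝ) t, EX s t f ≤ EY s t f := by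
    intro s hsIoo
    obtain ⟨hs0, hst⟩ := hsIoo
    have hsT : s ≤ T := le_trans hst.le htT
    set K : Set (ℝ × ℝ) := (Icc s T ×ˢ Icc s T) ∩ {p : ℝ × ℝ | p.1 ≤ p.2} with hK
    have hKcomp : IsCompact K :=
      (isCompact_Icc.prod isCompact_Icc).inter_right (isClosed_le continuous_fst continuous_snd)
    have hKsub : K ⊆ S := by
      rintro ⟨a, b⟩ ⟨⟨ha, hb⟩, hab⟩
      exact ⟨le_trans hs0.le ha.1, hab, hb.2⟩
    obtain ⟨C, hC0, hC⟩ := CRG_bound EY hKcomp (fun g => (hcontY g).mono hKsub)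
    set g : ℝ → B := fun r => EY s r (u r) with hg
    have hucont : ContinuousOn u (Icc s t) := by
      refine ContinuousOn.comp (hcontX f)
        ((continuous_id.prodMk continuous_const).continuousOn :
          ContinuousOn (fun r : ℝ => ((r, t) : ℝ × ℝ)) (Icc s t)) ?_
      intro r hr
      exact ⟨le_trans hs0.le hr.1, hr.2, htT⟩
    have hmemK : ∀ r ∈ Icc s t, ((s, r) : ℝ × ℝ) ∈ K := fun r hr =>
      ⟨⟨⟨le_refl s, hsT⟩, ⟨hr.1, le_trans hr.2 htT⟩⟩, hr.1⟩
    -- continuity of g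
    have hgcont : ContinuousOn g (Icc s t) := by
      intro r0 hr0
      have hpath : Tendsto (fun r : ℝ => ((s, r) : ℝ × ℝ)) (𝓝[Icc s t] r0) (𝓝[S] (s, r0)) := by
        rw [tendsto_nhdsWithin_iff]
        refine ⟨((continuous_const.prodMk continuous_id).tendsto r0).mono_left
          nhdsWithin_le_nhds, ?_⟩
        filter_upwards [self_mem_nhdsWithin] with r hr
        exact ⟨hs0.le, hr.1, le_trans hr.2 htT⟩
      have hcw : Tendsto (fun p : ℝ × ℝ => EY p.1 p.2 (u r0)) (𝓝[S] ((s, r0) : ℝ × ℝ))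
          (𝓝 (EY s r0 (u r0))) :=
        (hcontY (u r0)) (s, r0) ⟨hs0.le, hr0.1, le_trans hr0.2 htT⟩
      have h2 : Tendsto (fun r => EY s r (u r0)) (𝓝[Icc s t] r0) (𝓝 (EY s r0 (u r0))) :=
        hcw.comp hpath
      have h1 : Tendsto (fun r => EY s r (u r - u r0)) (𝓝[Icc s t] r0) (𝓝 0) := by
        apply squeeze_zero_norm' (a := fun r : ℝ =>
          if r ∈ Icc s t then C * ‖u r - u r0‖ else 0)
        · filter_upwards [self_mem_nhdsWithin] with r hr
          rw [if_pos hr]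
          calc ‖EY s r (u r - u r0)‖ ≤ ‖EY s r‖ * ‖u r - u r0‖ := (EY s r).le_opNorm _
            _ ≤ C * ‖u r - u r0‖ :=
              mul_le_mul_of_nonneg_right (hC _ (hmemK r hr)) (norm_nonneg _)
        · have hsub : Tendsto (fun r => u r - u r0) (𝓝[Icc s t] r0) (𝓝 0) := by
            have hu0 : Tendsto u (𝓝[Icc s t] r0) (𝓝 (u r0)) := hucont r0 hr0
            have := hu0.sub (tendsto_const_nhds (x := u r0))
            simpa using this
          have hCn : Tendsto (fun r => C * ‖u r - u r0‖) (𝓝[Icc s t] r0) (𝓝 0) := by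
            have := hsub.norm.const_mul C
            simpa using this
          refine hCn.congr' ?_
          filter_upwards [self_mem_nhdsWithin] with r hr
          rw [if_pos hr]
      have : Tendsto g (𝓝[Icc s t] r0) (𝓝 (g r0)) := by
        have hsum := h1.add h2
        rw [zero_add] at hsum
        refine hsum.congr fun r => ?_
        show EY s r (u r - u r0) + EY s r (u r0) = EY s r (u r)
        rw [map_sub, sub_add_cancel]
      exact this
    -- right derivative of g
    have hderiv : ∀ r ∈ Ioo s t, HasDerivWithinAt g (EY s r (dX r + aY r)) (Ioi r) r := by
      intro r hr
      have hr0t : r ∈ Ioo (0:ℝ) t := ⟨lt_trans hs0 hr.1, hr.2⟩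
      have hrT : r < T := lt_of_lt_of_le hr.2 htT
      rw [CRG_hasDerivWithinAt_Ioi_iff]
      have hmemK2 : ∀ h : ℝ, h ∈ Ioo (0:ℝ) (t - r) → ((r, r + h) : ℝ × ℝ) ∈ K := by
        intro h hh
        have hle : r + h ≤ T := by
          have : r + h < t := by linarith [hh.2]
          linarith
        exact ⟨⟨⟨hr.1.le, hrT.le⟩, ⟨le_trans hr.1.le (le_add_of_nonneg_right hh.1.le), hle⟩⟩,
          le_add_of_nonneg_right hh.1.le⟩
      have hterm1 : Tendsto (fun h : ℝ => EY r (r + h) (h⁻¹ • (u (r + h) - u r) - dX r))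
          (𝓝[>] (0:ℝ)) (𝓝 0) := by
        apply squeeze_zero_norm' (a := fun h : ℝ => C * ‖h⁻¹ • (u (r + h) - u r) - dX r‖)
        · filter_upwards [Ioo_mem_nhdsGT_of_mem (Set.left_mem_Ico.2 (sub_pos.2 hr.2))]
            with h hh
          calc ‖EY r (r + h) (h⁻¹ • (u (r + h) - u r) - dX r)‖
              ≤ ‖EY r (r + h)‖ * ‖h⁻¹ • (u (r + h) - u r) - dX r‖ :=
                (EY r (r + h)).le_opNorm _
            _ ≤ C * ‖h⁻¹ • (u (r + h) - u r) - dX r‖ :=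
                mul_le_mul_of_nonneg_right (hC _ (hmemK2 h hh)) (norm_nonneg _)
        · have hdx : Tendsto (fun h : ℝ => h⁻¹ • (u (r + h) - u r)) (𝓝[>] (0:ℝ))
              (𝓝 (dX r)) :=
            CRG_hasDerivWithinAt_Ioi_iff.1 ((hdiffX r hr0t).mono Ioi_subset_Ici_self)
          have h0 : Tendsto (fun h : ℝ => ‖h⁻¹ • (u (r + h) - u r) - dX r‖) (𝓝[>] (0:ℝ))
              (𝓝 0) := by
            have := hdx.sub (tendsto_const_nhds (x := dX r))
            rw [sub_self] at this
            simpa using this.norm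
          have := h0.const_mul C
          simpa using this
      have hterm2 : Tendsto (fun h : ℝ => EY r (r + h) (dX r)) (𝓝[>] (0:ℝ)) (𝓝 (dX r)) := by
        have hpath : Tendsto (fun h : ℝ => ((r, r + h) : ℝ × ℝ)) (𝓝[>] (0:ℝ))
            (𝓝[S] (r, r)) := by
          rw [tendsto_nhdsWithin_iff]
          constructor
          · have h' : Tendsto (fun h : ℝ => r + h) (𝓝 (0:ℝ)) (𝓝 r) := by
              simpa using (continuous_add_left r).tendsto (0:ℝ)
            exact (tendsto_const_nhds.prodMk_nhds (h'.mono_left nhdsWithin_le_nhds))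
          · filter_upwards [Ioo_mem_nhdsGT_of_mem (Set.left_mem_Ico.2 (sub_pos.2 hrT))]
              with h hh
            exact ⟨hr0t.1.le, le_add_of_nonneg_right hh.1.le,
              (by linarith [hh.2] : r + h ≤ T)⟩
        have hcw2 : Tendsto (fun p : ℝ × ℝ => EY p.1 p.2 (dX r)) (𝓝[S] ((r, r) : ℝ × ℝ))
            (𝓝 (EY r r (dX r))) :=
          (hcontY (dX r)) (r, r) ⟨hr0t.1.le, le_refl r, hrT.le⟩
        have hc := hcw2.comp hpath
        have hrr : EY r r (dX r) = dX r := by rw [hidY r hr0t.1.le hrT.le]; rfl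
        rw [hrr] at hc
        exact hc
      have hterm3 := hdom r hr0t
      have hw : Tendsto (fun h : ℝ => h⁻¹ • (EY r (r + h) (u (r + h)) - u r)) (𝓝[>] (0:ℝ))
          (𝓝 (dX r + aY r)) := by
        have hsum := (hterm1.add hterm2).add hterm3
        rw [zero_add] at hsum
        refine hsum.congr fun h => ?_
        show EY r (r + h) (h⁻¹ • (u (r + h) - u r) - dX r) + EY r (r + h) (dX r)
            + h⁻¹ • (EY r (r + h) (u r) - u r)
          = h⁻¹ • (EY r (r + h) (u (r + h)) - u r)
        simp only [map_sub, _root_.map_smul, smul_sub]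
        abel
      have hEYsr := ((EY s r).continuous.tendsto (dX r + aY r)).comp hw
      refine hEYsr.congr' ?_
      filter_upwards [Ioo_mem_nhdsGT_of_mem (Set.left_mem_Ico.2 (sub_pos.2 hr.2))] with h hh
      have hcomp : EY s (r + h) (u (r + h)) = EY s r (EY r (r + h) (u (r + h))) :=
        hcompY s r (r + h) hs0.le hr.1.le (le_add_of_nonneg_right hh.1.le)
          (by linarith [hh.2, htT]) _
      show (EY s r) (h⁻¹ • (EY r (r + h) (u (r + h)) - u r)) = h⁻¹ • (g (r + h) - g r)
      rw [_root_.map_smul, map_sub, ← hcomp]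
    -- integrability
    have hφint : IntervalIntegrable (fun r => EY s r (dX r + aY r)) volume s t := by
      have h1 := (hint s ⟨hs0, hst⟩).neg
      have heq : (fun r => EY s r (dX r + aY r))
          = fun r => -(EY s r (-(dX r) - aY r)) := by
        funext r
        rw [← map_neg]
        congr 1
        abel
      rw [heq]
      exact h1
    have hftc := intervalIntegral.integral_eq_sub_of_hasDeriv_right_of_le hst.le hgcont
      hderiv hφint
    have hnonneg : (0:B) ≤ ∫ r in s..t, EY s r (dX r + aY r) := by
      apply CRG_integral_nonneg hst hφint
      intro r hr
      have hr0t : r ∈ Ioo (0:ℝ) t := ⟨lt_trans hs0 hr.1, hr.2⟩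
      have hsum : (0:B) ≤ dX r + aY r := by
        have h := add_le_add_left (hord r hr0t) (dX r)
        rwa [neg_add_cancel, add_comm] at h
      exact hpos s r hs0.le hr.1.le (le_trans hr.2.le htT) _ hsum
    rw [hftc] at hnonneg
    have hgt : g t = EY s t f := by
      show EY s t (EX t t f) = EY s t f
      rw [hidX t ht0.le htT]
      rfl
    have hgs : g s = EX s t f := by
      show EY s s (EX s t f) = EX s t f
      rw [hidY s hs0.le hsT]
      rfl
    rw [hgt, hgs] at hnonneg
    exact sub_nonneg.1 hnonneg
  intro s hs0 hst
  rcases eq_or_lt_of_le hst with heq | hst'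
  · subst heq
    rw [hidX s hs0 (le_trans hst htT), hidY s hs0 (le_trans hst htT)]
  · rcases eq_or_lt_of_le hs0 with heq0 | hs0'
    · subst heq0
      haveI hO : (𝓝[Ioo (0:ℝ) t] (0:ℝ)).NeBot := by
        apply mem_closure_iff_nhdsWithin_neBot.1
        rw [closure_Ioo (ne_of_lt ht0)]
        exact ⟨le_refl 0, ht0.le⟩
      have hpathX : Tendsto (fun r : ℝ => ((r, t) : ℝ × ℝ)) (𝓝[Ioo (0:ℝ) t] 0)
          (𝓝[S] (0, t)) := by
        rw [tendsto_nhdsWithin_iff]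
        refine ⟨((continuous_id.prodMk continuous_const).tendsto 0).mono_left
          nhdsWithin_le_nhds, ?_⟩
        filter_upwards [self_mem_nhdsWithin] with r hr
        exact ⟨hr.1.le, hr.2.le, htT⟩
      have hcwX : Tendsto (fun p : ℝ × ℝ => EX p.1 p.2 f) (𝓝[S] (((0:ℝ), t) : ℝ × ℝ))
          (𝓝 (EX 0 t f)) := (hcontX f) ((0:ℝ), t) ⟨le_refl 0, ht0.le, htT⟩
      have hcwY : Tendsto (fun p : ℝ × ℝ => EY p.1 p.2 f) (𝓝[S] (((0:ℝ), t) : ℝ × ℝ))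
          (𝓝 (EY 0 t f)) := (hcontY f) ((0:ℝ), t) ⟨le_refl 0, ht0.le, htT⟩
      have h1 := hcwX.comp hpathX
      have h2 := hcwY.comp hpathX
      refine le_of_tendsto_of_tendsto h1 h2 ?_
      filter_upwards [self_mem_nhdsWithin] with r hr
      exact key r hr
    · exact key s ⟨hs0', hst'⟩
end

section
/- (Comparison by the martingale comparison method, right generators.) Fix t > 0 and a bounded measurable f : S → ℝ. Suppose X has transition kernels (κ^X_{s,r}) with respect to (ℱ^X_s) and Y has transition kernels (κ^Y_{s,r}) with respect to (ℱ^Y_s), and X_0 = Y_0 = x₀ P-a.s. for some x₀ ∈ S. Let g(s,x) := ∫ f(y) κ^X_{s,t}(x,dy) for 0 ≤ s ≤ t and assume g is jointly measurable. Assume there exist jointly measurable bounded D, aX, aY : [0,t] × S → ℝ such that for every x ∈ S and every 0 ≤ s ≤ t: (i) the map r ↦ ∫ g(r,y) κ^X_{s,r}(x,dy) has right derivative ∫ (D(r,y) + aX(r,y)) κ^X_{s,r}(x,dy) at every r ∈ [s,t); (ii) the map r ↦ ∫ g(r,y) κ^Y_{s,r}(x,dy) is continuous on [s,t] and has right derivative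 ∫ (D(r,y) + aY(r,y)) κ^Y_{s,r}(x,dy) at every r ∈ [s,t). If for Lebesgue-a.e. u ∈ [0,t) the inequality aX(u,·) ≥ aY(u,·) holds (P ∘ Y_u⁻¹)-almost surely, then E[f(Y_t)] ≤ E[f(X_t)]. -/
open Set Filter Topology MeasureTheory ProbabilityTheory

/-- `κ` is a family of transition kernels for the process `X` with respect to the
filtration `ℱ` and the measure `μ`. -/
def IsTransitionKernels {S Ω : Type*} [MeasurableSpace S] {mΩ : MeasurableSpace Ω}
    (μ : Measure Ω) (ℱ : Filtration ℝ mΩ) (X : ℝ → Ω → S)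
    (κ : ℝ → ℝ → Kernel S S) : Prop :=
  (∀ s : ℝ, 0 ≤ s → ∀ x : S, κ s s x = Measure.dirac x) ∧
  (∀ h : S → ℝ, Measurable h → (∃ C, ∀ z, |h z| ≤ C) →
    ∀ s r t : ℝ, 0 ≤ s → s ≤ r → r ≤ t → ∀ x : S,
      ∫ y, (∫ z, h z ∂(κ r t y)) ∂(κ s r x) = ∫ z, h z ∂(κ s t x)) ∧
  (∀ h : S → ℝ, Measurable h → (∃ C, ∀ z, |h z| ≤ C) →
    ∀ s t : ℝ, 0 ≤ s → s ≤ t →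
      μ[(fun ω => h (X t ω)) | ℱ s] =ᵐ[μ] fun ω => ∫ y, h y ∂(κ s t (X s ω)))

/-- Comparison of Markov processes by the martingale comparison method, right
generators (Theorem 2.9).  Here `g s x = T^X_{s,t} f (x) = ∫ f dκX_{s,t}(x,·)` is the
linking function, `D` plays the role of its right time derivative and `aX`, `aY` of
`A^{X+}_s g(s,·)`, `A^{Y+}_s g(s,·)`, expressed through the kernels (Definition 2.5).
If `aX ≥ aY` (a.e. in time, a.s. in space w.r.t. the law of `Y`), then
`E[f(Y_t)] ≤ E[f(X_t)]`. -/
theorem comparison_martingale_method_right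
    {S Ω : Type*} [MeasurableSpace S] {mΩ : MeasurableSpace Ω}
    (μ : Measure Ω) [IsProbabilityMeasure μ] (ℱX ℱY : Filtration ℝ mΩ)
    (X Y : ℝ → Ω → S)
    (hXad : ∀ s : ℝ, 0 ≤ s → Measurable[ℱX s] (X s))
    (hYad : ∀ s : ℝ, 0 ≤ s → Measurable[ℱY s] (Y s))
    (κX κY : ℝ → ℝ → Kernel S S)
    [∀ s r : ℝ, IsMarkovKernel (κX s r)] [∀ s r : ℝ, IsMarkovKernel (κY s r)]
    (hκX : IsTransitionKernels μ ℱX X κX) (hκY : IsTransitionKernels μ ℱY Y κY)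
    (t : ℝ) (ht : 0 < t)
    (f : S → ℝ) (hf : Measurable f) (hfb : ∃ C, ∀ z, |f z| ≤ C)
    (x₀ : S) (hx₀ : ∀ᵐ ω ∂μ, X 0 ω = x₀ ∧ Y 0 ω = x₀)
    (hg : Measurable (Function.uncurry fun s x => ∫ y, f y ∂(κX s t x)))
    (D aX aY : ℝ → S → ℝ)
    (hDm : Measurable (Function.uncurry D)) (hDb : ∃ C, ∀ u z, |D u z| ≤ C)
    (haXm : Measurable (Function.uncurry aX)) (haXb : ∃ C, ∀ u z, |aX u z| ≤ C)
    (haYm : Measurable (Function.uncurry aY)) (haYb : ∃ C, ∀ u z, |aY u z| ≤ C)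
    (hgenX : ∀ (x : S) (s : ℝ), 0 ≤ s → s ≤ t → ∀ r : ℝ, s ≤ r → r < t →
      HasDerivWithinAt
        (fun r' => ∫ y, (∫ z, f z ∂(κX r' t y)) ∂(κX s r' x))
        (∫ y, (D r y + aX r y) ∂(κX s r x)) (Ici r) r)
    (hgenY : ∀ (x : S) (s : ℝ), 0 ≤ s → s ≤ t →
      ContinuousOn (fun r => ∫ y, (∫ z, f z ∂(κX r t y)) ∂(κY s r x)) (Icc s t) ∧
      ∀ r : ℝ, s ≤ r → r < t →
        HasDerivWithinAt
          (fun r' => ∫ y, (∫ z, f z ∂(κX r' t y)) ∂(κY s r' x))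
          (∫ y, (D r y + aY r y) ∂(κY s r x)) (Ici r) r)
    (hord : ∀ᵐ u ∂(volume.restrict (Ico (0:ℝ) t)),
      ∀ᵐ x ∂(Measure.map (Y u) μ), aY u x ≤ aX u x) :
    ∫ ω, f (Y t ω) ∂μ ≤ ∫ ω, f (X t ω) ∂μ := by
  classical
  obtain ⟨Cf, hCf⟩ := hfb
  obtain ⟨CD, hCD⟩ := hDb
  obtain ⟨CY, hCY⟩ := haYb
  have hYmeas : ∀ u : ℝ, 0 ≤ u → Measurable (Y u) := fun u hu =>
    (hYad u hu).mono (ℱY.le u) le_rfl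
  have hXmeas : ∀ u : ℝ, 0 ≤ u → Measurable (X u) := fun u hu =>
    (hXad u hu).mono (ℱX.le u) le_rfl
  -- law identities
  have lawY : ∀ u : ℝ, 0 ≤ u → ∀ h : S → ℝ, Measurable h → (∃ C, ∀ z, |h z| ≤ C) →
      ∫ ω, h (Y u ω) ∂μ = ∫ y, h y ∂(κY 0 u x₀) := by
    intro u hu h hm hb
    have hmark := hκY.2.2 h hm hb 0 u le_rfl hu
    have h1 : ∫ ω, h (Y u ω) ∂μ = ∫ ω, (μ[(fun ω => h (Y u ω)) | ℱY 0]) ω ∂μ :=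
      (integral_condExp (ℱY.le 0)).symm
    have h2 : (fun ω => ∫ y, h y ∂(κY 0 u (Y 0 ω))) =ᵐ[μ]
        fun _ => ∫ y, h y ∂(κY 0 u x₀) := by
      filter_upwards [hx₀] with ω hω
      rw [hω.2]
    rw [h1, integral_congr_ae hmark, integral_congr_ae h2, integral_const]
    simp
  have lawX : ∫ ω, f (X t ω) ∂μ = ∫ y, f y ∂(κX 0 t x₀) := by
    have hmark := hκX.2.2 f hf ⟨Cf, hCf⟩ 0 t le_rfl ht.le
    have h1 : ∫ ω, f (X t ω) ∂μ = ∫ ω, (μ[(fun ω => f (X t ω)) | ℱX 0]) ω ∂μ :=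
      (integral_condExp (ℱX.le 0)).symm
    have h2 : (fun ω => ∫ y, f y ∂(κX 0 t (X 0 ω))) =ᵐ[μ]
        fun _ => ∫ y, f y ∂(κX 0 t x₀) := by
      filter_upwards [hx₀] with ω hω
      rw [hω.1]
    rw [h1, integral_congr_ae hmark, integral_congr_ae h2, integral_const]
    simp
  -- the linking function along Y
  set φ : ℝ → ℝ := fun r => ∫ y, (∫ z, f z ∂(κX r t y)) ∂(κY 0 r x₀) with hφdef
  obtain ⟨hφcont, hφderiv⟩ := hgenY x₀ 0 le_rfl ht.le
  set D' : ℝ → ℝ := fun u => ∫ y, (D u y + aY u y) ∂(κY 0 u x₀) with hD'def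
  -- D = -aX pointwise on [0,t)
  have hDX : ∀ r : ℝ, 0 ≤ r → r < t → ∀ x : S, D r x + aX r x = 0 := by
    intro r hr hrt x
    have hconst : ∀ r' ∈ Icc r t,
        ∫ y, (∫ z, f z ∂(κX r' t y)) ∂(κX r r' x) = ∫ z, f z ∂(κX r t x) :=
      fun r' hr' => hκX.2.1 f hf ⟨Cf, hCf⟩ r r' t hr hr'.1 hr'.2 x
    have hd := hgenX x r hr hrt.le r le_rfl hrt
    have heq : (fun _ : ℝ => ∫ z, f z ∂(κX r t x)) =ᶠ[𝓝[Ici r] r]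
        fun r' => ∫ y, (∫ z, f z ∂(κX r' t y)) ∂(κX r r' x) := by
      filter_upwards [self_mem_nhdsWithin,
        mem_nhdsWithin_of_mem_nhds (Iio_mem_nhds hrt)] with r' h1 h2
      exact (hconst r' ⟨h1, le_of_lt h2⟩).symm
    have hd0 : HasDerivWithinAt (fun _ : ℝ => ∫ z, f z ∂(κX r t x))
        (∫ y, (D r y + aX r y) ∂(κX r r x)) (Ici r) r :=
      hd.congr_of_eventuallyEq heq (hconst r ⟨le_rfl, hrt.le⟩).symm
    have h0 : HasDerivWithinAt (fun _ : ℝ => ∫ z, f z ∂(κX r t x)) (0 : ℝ) (Ici r) r :=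
      hasDerivWithinAt_const r _ _
    have huniq : ∫ y, (D r y + aX r y) ∂(κX r r x) = 0 := by
      have e1 := hd0.derivWithin (uniqueDiffOn_Ici r r Set.self_mem_Ici)
      have e2 := h0.derivWithin (uniqueDiffOn_Ici r r Set.self_mem_Ici)
      rw [← e1, e2]
    rw [hκX.1 r hr x,
      integral_dirac' (fun y => D r y + aX r y) x ((hDm.of_uncurry_left.add haXm.of_uncurry_left).stronglyMeasurable)]
      at huniq
    exact huniq
  -- bound on D'
  have hD'b : ∀ u : ℝ, |D' u| ≤ CD + CY := by
    intro u
    have hb : ‖∫ y, (D u y + aY u y) ∂(κY 0 u x₀)‖ ≤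
        (CD + CY) * ((κY 0 u x₀) univ).toReal := by
      apply norm_integral_le_of_norm_le_const
      filter_upwards with y
      calc ‖D u y + aY u y‖ = |D u y + aY u y| := Real.norm_eq_abs _
        _ ≤ |D u y| + |aY u y| := abs_add_le _ _
        _ ≤ CD + CY := add_le_add (hCD u y) (hCY u y)
    simpa [Real.norm_eq_abs] using hb
  -- clamped version of φ
  set φc : ℝ → ℝ := fun u => φ (max 0 (min u t)) with hφcdef
  have hclamp : ∀ u ∈ Icc (0:ℝ) t, max 0 (min u t) = u := by
    intro u hu
    rw [min_eq_left hu.2, max_eq_right hu.1]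
  have hφccont : Continuous φc := by
    apply hφcont.comp_continuous (continuous_const.max (continuous_id.min continuous_const))
    intro u
    exact ⟨le_max_left _ _, max_le ht.le (min_le_right _ _)⟩
  -- approximating slopes
  set ψ : ℕ → ℝ → ℝ := fun n u => (φc (u + 1/((n:ℝ)+1)) - φc u) * ((n:ℝ)+1) with hψdef
  have hψmeas : ∀ n, Measurable (ψ n) := by
    intro n
    exact (((hφccont.comp (continuous_id.add continuous_const)).sub hφccont).mul
      continuous_const).measurable
  have hψtendsto : ∀ u ∈ Ico (0:ℝ) t, Tendsto (fun n => ψ n u) atTop (𝓝 (D' u)) := by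
    intro u hu
    have hder := hφderiv u hu.1 hu.2
    rw [hasDerivWithinAt_iff_tendsto_slope] at hder
    have hseq : Tendsto (fun n : ℕ => u + 1/((n:ℝ)+1)) atTop (𝓝[Ici u \ {u}] u) := by
      apply tendsto_nhdsWithin_of_tendsto_nhds_of_eventually_within
      · have := tendsto_one_div_add_atTop_nhds_zero_nat (𝕜 := ℝ)
        simpa using tendsto_const_nhds.add this
      · filter_upwards with n
        have hpos : (0:ℝ) < 1/((n:ℝ)+1) := by positivity
        refine ⟨mem_Ici.mpr (by linarith), fun hcon => ?_⟩
        rw [mem_singleton_iff] at hcon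
        have : (1:ℝ)/((n:ℝ)+1) = 0 := by linarith
        linarith
    have hcomp := hder.comp hseq
    refine hcomp.congr' ?_
    have hev : ∀ᶠ n : ℕ in atTop, 1/((n:ℝ)+1) ≤ t - u :=
      tendsto_one_div_add_atTop_nhds_zero_nat.eventually_le_const (sub_pos.mpr hu.2)
    filter_upwards [hev] with n hn
    have hpos : (0:ℝ) < 1/((n:ℝ)+1) := by positivity
    have hv : u + 1/((n:ℝ)+1) ∈ Icc (0:ℝ) t := ⟨by linarith [hu.1], by linarith⟩
    have h1 : φc (u + 1/((n:ℝ)+1)) = φ (u + 1/((n:ℝ)+1)) := by rw [hφcdef]; simp only []; rw [hclamp _ hv]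
    have h2 : φc u = φ u := by rw [hφcdef]; simp only []; rw [hclamp u ⟨hu.1, hu.2.le⟩]
    show slope φ u (u + 1/((n:ℝ)+1)) = ψ n u
    rw [hψdef]
    simp only [h1, h2, slope_def_field]
    have hsub : u + 1/((n:ℝ)+1) - u = 1/((n:ℝ)+1) := by ring
    rw [hsub, div_eq_iff (ne_of_gt hpos)]
    field_simp
  -- measurability and integrability of D'
  have haemeas : AEMeasurable D' (volume.restrict (Ioc (0:ℝ) t)) := by
    have hres : volume.restrict (Ioc (0:ℝ) t) = volume.restrict (Ico (0:ℝ) t) :=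
      restrict_Ico_eq_restrict_Ioc.symm
    rw [hres]
    apply aemeasurable_of_tendsto_metrizable_ae' (fun n => (hψmeas n).aemeasurable)
    filter_upwards [ae_restrict_mem measurableSet_Ico] with u hu
    exact hψtendsto u hu
  haveI hfin : IsFiniteMeasure (volume.restrict (Ioc (0:ℝ) t)) := by
    constructor
    rw [Measure.restrict_apply_univ, Real.volume_Ioc]
    exact ENNReal.ofReal_lt_top
  have hIoc : IntegrableOn D' (Ioc (0:ℝ) t) volume := by
    refine ⟨haemeas.aestronglyMeasurable, ?_⟩
    apply HasFiniteIntegral.of_bounded (C := CD + CY)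
    filter_upwards with u
    simpa [Real.norm_eq_abs] using hD'b u
  have hIntInt : IntervalIntegrable D' volume 0 t :=
    (intervalIntegrable_iff_integrableOn_Ioc_of_le ht.le).2 hIoc
  -- FTC
  have hFTC : ∫ u in (0:ℝ)..t, D' u = φ t - φ 0 := by
    apply intervalIntegral.integral_eq_sub_of_hasDeriv_right_of_le ht.le hφcont
      (fun u hu => (hφderiv u hu.1.le hu.2).mono Ioi_subset_Ici_self) hIntInt
  -- a.e. nonpositivity of D'
  have hord' : ∀ᵐ u ∂(volume.restrict (Ioc (0:ℝ) t)), D' u ≤ 0 := by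
    rw [← restrict_Ico_eq_restrict_Ioc]
    filter_upwards [hord, ae_restrict_mem measurableSet_Ico] with u hP hu
    -- transfer a.e. inequality to the kernel measure
    set B : Set S := {x | aX u x < aY u x} with hBdef
    have hBmeas : MeasurableSet B := measurableSet_lt haXm.of_uncurry_left haYm.of_uncurry_left
    have hmap0 : Measure.map (Y u) μ B = 0 := by
      rw [ae_iff] at hP
      simpa [hBdef, not_le] using hP
    have hindm : Measurable (B.indicator (fun _ => (1:ℝ))) :=
      measurable_const.indicator hBmeas
    have hindb : ∃ C, ∀ z, |B.indicator (fun _ => (1:ℝ)) z| ≤ C := by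
      refine ⟨1, fun z => ?_⟩
      by_cases hz : z ∈ B <;> simp [Set.indicator_apply, hz]
    have hlaw := lawY u hu.1 (B.indicator (fun _ => (1:ℝ))) hindm hindb
    have hmapint : ∫ ω, B.indicator (fun _ => (1:ℝ)) (Y u ω) ∂μ =
        ∫ x, B.indicator (fun _ => (1:ℝ)) x ∂(Measure.map (Y u) μ) :=
      (integral_map (hYmeas u hu.1).aemeasurable hindm.aestronglyMeasurable).symm
    have hone : (fun _ : S => (1:ℝ)) = (1 : S → ℝ) := rfl
    rw [hmapint] at hlaw
    rw [hone, integral_indicator_one hBmeas, integral_indicator_one hBmeas] at hlaw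
    have hκ0 : (κY 0 u x₀) B = 0 := by
      have hfin1 : (κY 0 u x₀) B ≠ ⊤ := measure_ne_top _ _
      have : ((κY 0 u x₀) B).toReal = 0 := by rw [← measureReal_def, ← hlaw, measureReal_def, hmap0]; simp
      exact (ENNReal.toReal_eq_zero_iff _).1 this |>.resolve_right hfin1
    have hae : ∀ᵐ x ∂(κY 0 u x₀), aY u x ≤ aX u x := by
      rw [ae_iff]
      simpa [hBdef, not_le] using hκ0
    have hrw : D' u = ∫ y, (aY u y - aX u y) ∂(κY 0 u x₀) := by
      apply integral_congr_ae
      filter_upwards with y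
      have h := hDX u hu.1 hu.2 y
      show D u y + aY u y = aY u y - aX u y
      linarith
    rw [hrw]
    apply integral_nonpos_of_ae
    filter_upwards [hae] with y hy
    simpa using sub_nonpos.2 hy
  have hintle : ∫ u in (0:ℝ)..t, D' u ≤ 0 := by
    rw [intervalIntegral.integral_of_le ht.le]
    exact integral_nonpos_of_ae hord'
  -- endpoint identifications
  have hφt : φ t = ∫ ω, f (Y t ω) ∂μ := by
    have h1 : ∀ y : S, (∫ z, f z ∂(κX t t y)) = f y := by
      intro y
      rw [hκX.1 t ht.le y, integral_dirac' f y hf.stronglyMeasurable]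
    have h2 : φ t = ∫ y, f y ∂(κY 0 t x₀) := by
      rw [hφdef]
      simp only [h1]
    rw [h2, ← lawY t ht.le f hf ⟨Cf, hCf⟩]
  have hφ0 : φ 0 = ∫ ω, f (X t ω) ∂μ := by
    have h2 : φ 0 = ∫ z, f z ∂(κX 0 t x₀) := by
      rw [hφdef]
      simp only []
      rw [hκY.1 0 le_rfl x₀,
        integral_dirac' _ x₀ hg.of_uncurry_left.stronglyMeasurable]
    rw [h2, ← lawX]
  rw [← hφt, ← hφ0]
  linarith [hFTC ▸ hintle]
end

section
/- (Comparison inequality from the supermartingale property of the linking process.) Fix t > 0 and a bounded measurable f : S → ℝ. Suppose X has transition kernels (κ^X_{s,r}) with respect to (ℱ^X_s), Y is adapted to (ℱ^Y_s), and X_0 = Y_0 = x₀ P-a.s. for some x₀ ∈ S. Let g(s,x) := ∫ f(y) κ^X_{s,t}(x,dy). If the linking process s ↦ g(s, Y_s), 0 ≤ s ≤ t, is a supermartingale with respect to (ℱ^Y_s) and P, then E[f(Y_t)] ≤ E[f(X_t)]. -/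
open Set Filter Topology MeasureTheory ProbabilityTheory

/-- Comparison inequality from the supermartingale property of the linking process
(inequality (2.1)): if `s ↦ g(s, Y_s) = T^X_{s,t} f (Y_s)` is a supermartingale on
`[0,t]` with respect to `(ℱ^Y_s)`, then `E[f(Y_t)] ≤ E[f(X_t)]`. -/
theorem comparison_from_supermartingale_linking
    {S Ω : Type*} [MeasurableSpace S] {mΩ : MeasurableSpace Ω}
    (μ : Measure Ω) [IsProbabilityMeasure μ] (ℱX ℱY : Filtration ℝ mΩ)
    (X Y : ℝ → Ω → S)
    (hXad : ∀ s : ℝ, 0 ≤ s → Measurable[ℱX s] (X s))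
    (hYad : ∀ s : ℝ, 0 ≤ s → Measurable[ℱY s] (Y s))
    (κX : ℝ → ℝ → Kernel S S) [∀ s r : ℝ, IsMarkovKernel (κX s r)]
    (hκX : IsTransitionKernels μ ℱX X κX)
    (t : ℝ) (ht : 0 < t)
    (f : S → ℝ) (hf : Measurable f) (hfb : ∃ C, ∀ z, |f z| ≤ C)
    (x₀ : S) (hx₀ : ∀ᵐ ω ∂μ, X 0 ω = x₀ ∧ Y 0 ω = x₀)
    (hadapted : ∀ s : ℝ, 0 ≤ s → s ≤ t →
      Integrable (fun ω => ∫ y, f y ∂(κX s t (Y s ω))) μ ∧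
      StronglyMeasurable[ℱY s] (fun ω => ∫ y, f y ∂(κX s t (Y s ω))))
    (hsup : ∀ s u : ℝ, 0 ≤ s → s ≤ u → u ≤ t →
      μ[(fun ω => ∫ y, f y ∂(κX u t (Y u ω))) | ℱY s]
        ≤ᵐ[μ] fun ω => ∫ y, f y ∂(κX s t (Y s ω))) :
    ∫ ω, f (Y t ω) ∂μ ≤ ∫ ω, f (X t ω) ∂μ := by

  obtain ⟨C, hC⟩ := hfb
  set c : ℝ := ∫ y, f y ∂(κX 0 t x₀) with hc
  -- integrability of f ∘ X t and f ∘ Y t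
  have hXtm : Measurable (X t) := (hXad t ht.le).mono (ℱX.le t) le_rfl
  have hfXt : Integrable (fun ω => f (X t ω)) μ := by
    refine ⟨(hf.comp hXtm).aestronglyMeasurable, ?_⟩
    refine HasFiniteIntegral.of_bounded (C := C) (ae_of_all _ fun ω => ?_)
    simpa [Real.norm_eq_abs] using hC (X t ω)
  -- LHS: E[f(Y t)] = ∫ g t ≤ ∫ g 0 = c
  have hgt : (fun ω => ∫ y, f y ∂(κX t t (Y t ω))) = fun ω => f (Y t ω) := by
    funext ω
    rw [hκX.1 t ht.le (Y t ω), integral_dirac' f _ hf.stronglyMeasurable]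
  have h1 : ∫ ω, f (Y t ω) ∂μ ≤ ∫ ω, (∫ y, f y ∂(κX 0 t (Y 0 ω))) ∂μ := by
    have hint_t : Integrable (fun ω => ∫ y, f y ∂(κX t t (Y t ω))) μ :=
      (hadapted t ht.le le_rfl).1
    calc ∫ ω, f (Y t ω) ∂μ
        = ∫ ω, (∫ y, f y ∂(κX t t (Y t ω))) ∂μ := by rw [hgt]
      _ = ∫ ω, (μ[(fun ω => ∫ y, f y ∂(κX t t (Y t ω))) | ℱY 0]) ω ∂μ := by
          rw [integral_condExp (ℱY.le 0)]
      _ ≤ ∫ ω, (∫ y, f y ∂(κX 0 t (Y 0 ω))) ∂μ := by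
          exact integral_mono_ae integrable_condExp (hadapted 0 le_rfl ht.le).1
            (hsup 0 t le_rfl ht.le le_rfl)
  have h2 : ∫ ω, (∫ y, f y ∂(κX 0 t (Y 0 ω))) ∂μ = c := by
    have : (fun ω => ∫ y, f y ∂(κX 0 t (Y 0 ω))) =ᵐ[μ] fun _ => c := by
      filter_upwards [hx₀] with ω hω
      rw [hω.2]
    rw [integral_congr_ae this, integral_const]
    simp
  -- RHS: E[f(X t)] = c
  have h3 : ∫ ω, f (X t ω) ∂μ = c := by
    have hm := hκX.2.2 f hf ⟨C, hC⟩ 0 t le_rfl ht.le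
    have : (fun ω => ∫ y, f y ∂(κX 0 t (X 0 ω))) =ᵐ[μ] fun _ => c := by
      filter_upwards [hx₀] with ω hω
      rw [hω.1]
    calc ∫ ω, f (X t ω) ∂μ
        = ∫ ω, (μ[(fun ω => f (X t ω)) | ℱX 0]) ω ∂μ := by
          rw [integral_condExp (ℱX.le 0)]
      _ = ∫ ω, (∫ y, f y ∂(κX 0 t (X 0 ω))) ∂μ := integral_congr_ae hm
      _ = c := by rw [integral_congr_ae this, integral_const]; simp
  rw [h3]
  exact h1.trans (le_of_eq h2)
end

section
/- (Supermartingale property of the linking process.) Fix t > 0 and a bounded measurable f : S → ℝ. Suppose X has transition kernels (κ^X_{s,r}) with respect to (ℱ^X_s) and Y has transition kernels (κ^Y_{s,r}) with respect to (ℱ^Y_s). Let g(s,x) := ∫ f(y) κ^X_{s,t}(x,dy) for 0 ≤ s ≤ t and assume g is jointly measurable. Assume there exist jointly measurable bounded D, aX, aY : [0,t] × S → ℝ such that for every x ∈ S and every 0 ≤ s ≤ t: (i) the map r ↦ ∫ g(r,y) κ^X_{s,r}(x,dy) has right derivative ∫ (D(r,y) + aX(r,y)) κ^X_{s,r}(x,dy)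 at every r ∈ [s,t); (ii) the map r ↦ ∫ g(r,y) κ^Y_{s,r}(x,dy) is continuous on [s,t] and has right derivative ∫ (D(r,y) + aY(r,y)) κ^Y_{s,r}(x,dy) at every r ∈ [s,t). If for Lebesgue-a.e. u ∈ [0,t) the inequality aX(u,·) ≥ aY(u,·) holds (P ∘ Y_u⁻¹)-almost surely, then the linking process s ↦ g(s, Y_s) = T^X_{s,t} f(Y_s), 0 ≤ s ≤ t, is a supermartingale with respect to (ℱ^Y_s) and P. -/
open Set Filter Topology MeasureTheory ProbabilityTheory

section AuxLemmas

lemma abs_integral_le_of_abs_le' {S : Type*} [MeasurableSpace S] {ν : Measure S}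
    [IsProbabilityMeasure ν] {h : S → ℝ} {C : ℝ} (hb : ∀ z, |h z| ≤ C) :
    |∫ z, h z ∂ν| ≤ C := by
  have h1 := norm_integral_le_of_norm_le_const (μ := ν) (f := h) (C := C)
    (Eventually.of_forall fun z => by rw [Real.norm_eq_abs]; exact hb z)
  rw [Real.norm_eq_abs] at h1
  simpa using h1

lemma integrable_of_abs_le' {Ω : Type*} {mΩ : MeasurableSpace Ω} {μ : Measure Ω}
    [IsFiniteMeasure μ] {h : Ω → ℝ} {C : ℝ} (hm : AEStronglyMeasurable h μ)
    (hb : ∀ ω, |h ω| ≤ C) : Integrable h μ :=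
  ⟨hm, HasFiniteIntegral.of_bounded (C := C) (Eventually.of_forall fun ω => by simpa using hb ω)⟩

lemma measurable_kernel_integral' {S : Type*} [MeasurableSpace S] (κ : Kernel S S)
    [IsMarkovKernel κ] {h : S → ℝ} (hm : Measurable h) :
    Measurable fun x => ∫ y, h y ∂(κ x) := by
  have : StronglyMeasurable (Function.uncurry fun (_ : S) (y : S) => h y) :=
    (hm.comp measurable_snd).stronglyMeasurable
  exact this.integral_kernel_prod_right.measurable

/-- Core analytic lemma: a function continuous on `[s,u]` with right derivative `c r ≤ 0`
(a.e.) is decreasing from `s` to `u`. -/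
lemma le_of_right_deriv_nonpos' {φ c : ℝ → ℝ} {s u L : ℝ} (hsu : s ≤ u)
    (hcont : ContinuousOn φ (Icc s u))
    (hder : ∀ r ∈ Ioo s u, HasDerivWithinAt φ (c r) (Ioi r) r)
    (hcm : AEMeasurable c (volume.restrict (Ioo s u)))
    (hcb : ∀ r ∈ Ioo s u, |c r| ≤ L)
    (hc0 : ∀ᵐ r ∂(volume.restrict (Ioo s u)), c r ≤ 0) :
    φ u ≤ φ s := by
  have hint : IntervalIntegrable c volume s u := by
    rw [intervalIntegrable_iff_integrableOn_Ioo_of_le hsu]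
    refine ⟨hcm.aestronglyMeasurable, ?_⟩
    refine HasFiniteIntegral.of_bounded (C := L) ?_
    filter_upwards [ae_restrict_mem measurableSet_Ioo] with r hr using by
      simpa using hcb r hr
  have heq := intervalIntegral.integral_eq_sub_of_hasDeriv_right_of_le hsu hcont hder hint
  have hle : (∫ r in s..u, c r) ≤ 0 := by
    rw [intervalIntegral.integral_of_le hsu,
      ← Measure.restrict_congr_set Ioo_ae_eq_Ioc]
    exact integral_nonpos_of_ae hc0
  linarith [heq ▸ hle]

/-- The right derivative of a function continuous on `[s,t]` is a.e. measurable on `(s,u)`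
for `u ≤ t`, being a pointwise limit of slopes. -/
lemma aemeasurable_right_deriv' {φ c : ℝ → ℝ} {s u t : ℝ} (hst : s ≤ t) (hut : u ≤ t)
    (hcont : ContinuousOn φ (Icc s t))
    (hder : ∀ r ∈ Ioo s u, HasDerivWithinAt φ (c r) (Ioi r) r) :
    AEMeasurable c (volume.restrict (Ioo s u)) := by
  set proj : ℝ → ℝ := fun r => max s (min r t) with hproj
  have hprojc : Continuous proj := continuous_const.max (continuous_id.min continuous_const)
  have hprojmem : ∀ r, proj r ∈ Icc s t := fun r =>
    ⟨le_max_left _ _, max_le (by simpa using hst) (min_le_right _ _)⟩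
  have hΦc : Continuous (φ ∘ proj) :=
    hcont.comp_continuous hprojc hprojmem
  set q : ℕ → ℝ → ℝ := fun n r =>
    ((φ ∘ proj) (r + ((n : ℝ) + 1)⁻¹) - (φ ∘ proj) r) * ((n : ℝ) + 1) with hq
  have hqm : ∀ n, Measurable (q n) := by
    intro n
    exact (((hΦc.comp (continuous_id.add continuous_const)).sub hΦc).mul
      continuous_const).measurable
  refine aemeasurable_of_tendsto_metrizable_ae atTop (fun n => (hqm n).aemeasurable) ?_
  filter_upwards [ae_restrict_mem measurableSet_Ioo] with r hr
  have hrt : r < t := lt_of_lt_of_le hr.2 hut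
  have hslope := (hasDerivWithinAt_iff_tendsto_slope).1 (hder r hr)
  have hIoi : Ioi r \ {r} = Ioi r := diff_singleton_eq_self (fun h => lt_irrefl r h)
  rw [hIoi] at hslope
  have hseq : Tendsto (fun n : ℕ => r + ((n : ℝ) + 1)⁻¹) atTop (𝓝[Ioi r] r) := by
    refine tendsto_nhdsWithin_of_tendsto_nhds_of_eventually_within _ ?_ ?_
    · have : Tendsto (fun n : ℕ => ((n : ℝ) + 1)⁻¹) atTop (𝓝 0) :=
        tendsto_one_div_add_atTop_nhds_zero_nat.congr (fun n => by
          rw [one_div])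
      simpa using tendsto_const_nhds.add this
    · exact Eventually.of_forall fun n => by
        simp only [mem_Ioi]
        exact lt_add_of_pos_right r (by positivity)
  have htend : Tendsto (fun n : ℕ => slope φ r (r + ((n : ℝ) + 1)⁻¹)) atTop (𝓝 (c r)) :=
    hslope.comp hseq
  refine htend.congr' ?_
  have hev : ∀ᶠ n : ℕ in atTop, r + ((n : ℝ) + 1)⁻¹ ≤ t := by
    have : Tendsto (fun n : ℕ => r + ((n : ℝ) + 1)⁻¹) atTop (𝓝 r) := by
      have : Tendsto (fun n : ℕ => ((n : ℝ) + 1)⁻¹) atTop (𝓝 0) :=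
        tendsto_one_div_add_atTop_nhds_zero_nat.congr (fun n => by rw [one_div])
      simpa using tendsto_const_nhds.add this
    exact this.eventually_le_const hrt
  filter_upwards [hev] with n hn
  have hpos : (0:ℝ) < ((n : ℝ) + 1)⁻¹ := by positivity
  have h1 : proj (r + ((n : ℝ) + 1)⁻¹) = r + ((n : ℝ) + 1)⁻¹ := by
    rw [hproj]
    simp only
    rw [min_eq_left hn, max_eq_right (le_trans hr.1.le (by linarith))]
  have h2 : proj r = r := by
    rw [hproj]; simp only
    rw [min_eq_left hrt.le, max_eq_right hr.1.le]
  rw [slope_def_field]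
  simp only [q, Function.comp, h1, h2]
  field_simp
  ring

/-- Differentiation under the integral sign, for right derivatives, with a uniform
Lipschitz bound. -/
lemma hasDerivWithinAt_integral_right' {Ω : Type*} {mΩ : MeasurableSpace Ω} (ν : Measure Ω)
    [IsFiniteMeasure ν] {F : ℝ → Ω → ℝ} {c : Ω → ℝ} {r t L : ℝ} (hrt : r < t)
    (hFi : ∀ r' ∈ Icc r t, Integrable (F r') ν)
    (hlip : ∀ ω, ∀ r' ∈ Ioc r t, |F r' ω - F r ω| ≤ L * (r' - r))
    (hder : ∀ ω, HasDerivWithinAt (fun r' => F r' ω) (c ω) (Ici r) r) :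
    HasDerivWithinAt (fun r' => ∫ ω, F r' ω ∂ν) (∫ ω, c ω ∂ν) (Ici r) r := by
  have hIci : Ici r \ {r} = Ioi r := by
    ext x
    simp only [mem_diff, mem_Ici, mem_singleton_iff, mem_Ioi]
    constructor
    · rintro ⟨h1, h2⟩; exact lt_of_le_of_ne h1 (Ne.symm h2)
    · intro h; exact ⟨h.le, ne_of_gt h⟩
  rw [hasDerivWithinAt_iff_tendsto_slope, hIci]
  have hmem : Ioc r t ∈ 𝓝[Ioi r] r := by
    rw [← Ioi_inter_Iic]
    exact inter_mem_nhdsWithin _ (Iic_mem_nhds hrt)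
  have key : Tendsto (fun r' => ∫ ω, slope (fun r'' => F r'' ω) r r' ∂ν)
      (𝓝[Ioi r] r) (𝓝 (∫ ω, c ω ∂ν)) := by
    refine tendsto_integral_filter_of_dominated_convergence (fun _ => L) ?_ ?_
      (integrable_const L) ?_
    · filter_upwards [hmem] with r' hr'
      have : (fun ω => slope (fun r'' => F r'' ω) r r') =
          fun ω => (r' - r)⁻¹ * (F r' ω - F r ω) := by
        funext ω; rw [slope_def_field]; field_simp
      rw [this]
      exact (((hFi r' ⟨hr'.1.le, hr'.2⟩).sub
        (hFi r ⟨le_rfl, hrt.le⟩)).const_mul _).aestronglyMeasurable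
    · filter_upwards [hmem] with r' hr'
      refine Eventually.of_forall fun ω => ?_
      rw [slope_def_field, Real.norm_eq_abs, abs_div,
        abs_of_pos (by linarith [hr'.1] : (0:ℝ) < r' - r),
        div_le_iff₀ (by linarith [hr'.1] : (0:ℝ) < r' - r)]
      exact hlip ω r' hr'
    · refine Eventually.of_forall fun ω => ?_
      have := (hasDerivWithinAt_iff_tendsto_slope).1 (hder ω)
      rwa [hIci] at this
  refine key.congr' ?_
  filter_upwards [hmem] with r' hr'
  have : (fun ω => slope (fun r'' => F r'' ω) r r') =
      fun ω => (r' - r)⁻¹ * (F r' ω - F r ω) := by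
    funext ω; rw [slope_def_field]; field_simp
  rw [this, integral_const_mul, integral_sub (hFi r' ⟨hr'.1.le, hr'.2⟩) (hFi r ⟨le_rfl, hrt.le⟩),
    slope_def_field]
  field_simp

end AuxLemmas

/-- Supermartingale property of the linking process (core of the proof of Theorem 2.9):
under the right space-time generator conditions for `X` and `Y` (through the kernels,
with right time derivative `D` of the linking function `g s x = ∫ f dκX_{s,t}(x,·)` and
generator parts `aX`, `aY`), the generator comparison `aX ≥ aY` implies that
`s ↦ g(s, Y_s) = T^X_{s,t} f (Y_s)` is a supermartingale on `[0,t]` w.r.t. `(ℱ^Y_s)`. -/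
theorem supermartingale_linking_process
    {S Ω : Type*} [MeasurableSpace S] {mΩ : MeasurableSpace Ω}
    (μ : Measure Ω) [IsProbabilityMeasure μ] (ℱX ℱY : Filtration ℝ mΩ)
    (X Y : ℝ → Ω → S)
    (hXad : ∀ s : ℝ, 0 ≤ s → Measurable[ℱX s] (X s))
    (hYad : ∀ s : ℝ, 0 ≤ s → Measurable[ℱY s] (Y s))
    (κX κY : ℝ → ℝ → Kernel S S)
    [∀ s r : ℝ, IsMarkovKernel (κX s r)] [∀ s r : ℝ, IsMarkovKernel (κY s r)]
    (hκX : IsTransitionKernels μ ℱX X κX) (hκY : IsTransitionKernels μ ℱY Y κY)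
    (t : ℝ) (ht : 0 < t)
    (f : S → ℝ) (hf : Measurable f) (hfb : ∃ C, ∀ z, |f z| ≤ C)
    (hg : Measurable (Function.uncurry fun s x => ∫ y, f y ∂(κX s t x)))
    (D aX aY : ℝ → S → ℝ)
    (hDm : Measurable (Function.uncurry D)) (hDb : ∃ C, ∀ u z, |D u z| ≤ C)
    (haXm : Measurable (Function.uncurry aX)) (haXb : ∃ C, ∀ u z, |aX u z| ≤ C)
    (haYm : Measurable (Function.uncurry aY)) (haYb : ∃ C, ∀ u z, |aY u z| ≤ C)
    (hgenX : ∀ (x : S) (s : ℝ), 0 ≤ s → s ≤ t → ∀ r : ℝ, s ≤ r → r < t →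
      HasDerivWithinAt
        (fun r' => ∫ y, (∫ z, f z ∂(κX r' t y)) ∂(κX s r' x))
        (∫ y, (D r y + aX r y) ∂(κX s r x)) (Ici r) r)
    (hgenY : ∀ (x : S) (s : ℝ), 0 ≤ s → s ≤ t →
      ContinuousOn (fun r => ∫ y, (∫ z, f z ∂(κX r t y)) ∂(κY s r x)) (Icc s t) ∧
      ∀ r : ℝ, s ≤ r → r < t →
        HasDerivWithinAt
          (fun r' => ∫ y, (∫ z, f z ∂(κX r' t y)) ∂(κY s r' x))
          (∫ y, (D r y + aY r y) ∂(κY s r x)) (Ici r) r)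
    (hord : ∀ᵐ u ∂(volume.restrict (Ico (0:ℝ) t)),
      ∀ᵐ x ∂(Measure.map (Y u) μ), aY u x ≤ aX u x) :
    (∀ s : ℝ, 0 ≤ s → s ≤ t →
      Integrable (fun ω => ∫ y, f y ∂(κX s t (Y s ω))) μ ∧
      StronglyMeasurable[ℱY s] (fun ω => ∫ y, f y ∂(κX s t (Y s ω)))) ∧
    (∀ s u : ℝ, 0 ≤ s → s ≤ u → u ≤ t →
      μ[(fun ω => ∫ y, f y ∂(κX u t (Y u ω))) | ℱY s]
        ≤ᵐ[μ] fun ω => ∫ y, f y ∂(κX s t (Y s ω))) := by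
  obtain ⟨Cf, hCf⟩ := hfb
  obtain ⟨CD, hCD⟩ := hDb
  obtain ⟨CaX, hCaX⟩ := haXb
  obtain ⟨CaY, hCaY⟩ := haYb
  have hΩ : Nonempty Ω := by
    by_contra h
    rw [not_nonempty_iff] at h
    have h1 : μ univ = 1 := measure_univ
    rw [univ_eq_empty_iff.mpr h, measure_empty] at h1
    exact zero_ne_one h1
  obtain ⟨x₀⟩ : Nonempty S := ⟨Y 0 (Classical.choice hΩ)⟩
  have hCD0 : 0 ≤ CD := le_trans (abs_nonneg _) (hCD 0 x₀)
  have hCaY0 : 0 ≤ CaY := le_trans (abs_nonneg _) (hCaY 0 x₀)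
  have hCaX0 : 0 ≤ CaX := le_trans (abs_nonneg _) (hCaX 0 x₀)
  have hL0 : 0 ≤ CD + CaY := add_nonneg hCD0 hCaY0
  -- sections of the linking function
  have hgm : ∀ r : ℝ, Measurable fun y => ∫ z, f z ∂(κX r t y) := fun r =>
    hg.comp (measurable_const.prodMk measurable_id)
  have hgb : ∀ (r : ℝ) (y : S), |∫ z, f z ∂(κX r t y)| ≤ Cf := fun r y =>
    abs_integral_le_of_abs_le' hCf
  have hDsec : ∀ r : ℝ, Measurable (D r) := fun r =>
    hDm.comp (measurable_const.prodMk measurable_id)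
  have haXsec : ∀ r : ℝ, Measurable (aX r) := fun r =>
    haXm.comp (measurable_const.prodMk measurable_id)
  have haYsec : ∀ r : ℝ, Measurable (aY r) := fun r =>
    haYm.comp (measurable_const.prodMk measurable_id)
  -- `D = -aX` on `[0,t) × S`
  have hDaX : ∀ r : ℝ, 0 ≤ r → r < t → ∀ x : S, D r x + aX r x = 0 := by
    intro r hr0 hrt x
    have hder := hgenX x r hr0 hrt.le r le_rfl hrt
    have hval : (∫ y, (D r y + aY r y) ∂(κX r r x)) = D r x + aY r x := by
      rw [hκX.1 r hr0 x]
      exact integral_dirac' _ x (((hDsec r).add (haYsec r)).stronglyMeasurable)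
    have hvalX : (∫ y, (D r y + aX r y) ∂(κX r r x)) = D r x + aX r x := by
      rw [hκX.1 r hr0 x]
      exact integral_dirac' _ x (((hDsec r).add (haXsec r)).stronglyMeasurable)
    rw [hvalX] at hder
    have hmem : Ici r ∩ Iio t ∈ 𝓝[Ici r] r := inter_mem_nhdsWithin _ (Iio_mem_nhds hrt)
    have hconst : ∀ r' ∈ Ici r ∩ Iio t,
        (∫ y, (∫ z, f z ∂(κX r' t y)) ∂(κX r r' x)) = ∫ z, f z ∂(κX r t x) :=
      fun r' hr' => hκX.2.1 f hf ⟨Cf, hCf⟩ r r' t hr0 hr'.1 hr'.2.le x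
    have h0 : HasDerivWithinAt (fun r' => ∫ y, (∫ z, f z ∂(κX r' t y)) ∂(κX r r' x))
        0 (Ici r) r := by
      refine (hasDerivWithinAt_const r (Ici r)
        (∫ z, f z ∂(κX r t x))).congr_of_eventuallyEq ?_ ?_
      · exact eventually_of_mem hmem hconst
      · exact hconst r ⟨self_mem_Ici, hrt⟩
    have hU : UniqueDiffWithinAt ℝ (Ici r) r := uniqueDiffOn_Ici r r self_mem_Ici
    have e1 := hder.derivWithin hU
    have e2 := h0.derivWithin hU
    rw [e2] at e1
    linarith
  have part1 : ∀ s : ℝ, 0 ≤ s → s ≤ t →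
      Integrable (fun ω => ∫ y, f y ∂(κX s t (Y s ω))) μ ∧
      StronglyMeasurable[ℱY s] (fun ω => ∫ y, f y ∂(κX s t (Y s ω))) := by
    intro s hs0 _
    have hmeas : Measurable[ℱY s] fun ω => ∫ y, f y ∂(κX s t (Y s ω)) :=
      (hgm s).comp (hYad s hs0)
    exact ⟨integrable_of_abs_le' ((hmeas.mono (ℱY.le s) le_rfl).aestronglyMeasurable)
        (fun ω => hgb s (Y s ω)), hmeas.stronglyMeasurable⟩
  refine ⟨part1, ?_⟩
  intro s u hs0 hsu hut
  have hst : s ≤ t := hsu.trans hut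
  -- pointwise facts about `φ x = fun r => ∫ y, g r y ∂(κY s r x)`
  have hφcont : ∀ x : S,
      ContinuousOn (fun r => ∫ y, (∫ z, f z ∂(κX r t y)) ∂(κY s r x)) (Icc s t) :=
    fun x => (hgenY x s hs0 hst).1
  have hφder : ∀ x : S, ∀ r : ℝ, s ≤ r → r < t →
      HasDerivWithinAt (fun r' => ∫ y, (∫ z, f z ∂(κX r' t y)) ∂(κY s r' x))
        (∫ y, (D r y + aY r y) ∂(κY s r x)) (Ici r) r :=
    fun x r h1 h2 => (hgenY x s hs0 hst).2 r h1 h2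
  have hcb : ∀ (r : ℝ) (x : S), |∫ y, (D r y + aY r y) ∂(κY s r x)| ≤ CD + CaY :=
    fun r x => abs_integral_le_of_abs_le' (fun y =>
      (abs_add_le _ _).trans (add_le_add (hCD r y) (hCaY r y)))
  -- Lipschitz bound for `φ`
  have hφlip : ∀ (x : S) (r : ℝ), s ≤ r → r < t → ∀ r' ∈ Icc r t,
      |(∫ y, (∫ z, f z ∂(κX r' t y)) ∂(κY s r' x)) -
        ∫ y, (∫ z, f z ∂(κX r t y)) ∂(κY s r x)| ≤ (CD + CaY) * (r' - r) := by
    intro x r hsr hrt r' hr'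
    have := norm_image_sub_le_of_norm_deriv_right_le_segment
      (f := fun ρ => ∫ y, (∫ z, f z ∂(κX ρ t y)) ∂(κY s ρ x))
      (f' := fun ρ => ∫ y, (D ρ y + aY ρ y) ∂(κY s ρ x)) (C := CD + CaY)
      ((hφcont x).mono (Icc_subset_Icc hsr le_rfl))
      (fun ρ hρ => hφder x ρ (hsr.trans hρ.1) hρ.2)
      (fun ρ _ => by rw [Real.norm_eq_abs]; exact hcb ρ x) r' hr'
    rw [Real.norm_eq_abs] at this
    exact this
  -- measurability / integrability in `ω`
  have hφmeas : ∀ r : ℝ, Measurable fun x => ∫ y, (∫ z, f z ∂(κX r t y)) ∂(κY s r x) :=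
    fun r => measurable_kernel_integral' (κY s r) (hgm r)
  have hcmeas : ∀ r : ℝ, Measurable fun x => ∫ y, (D r y + aY r y) ∂(κY s r x) :=
    fun r => measurable_kernel_integral' (κY s r) ((hDsec r).add (haYsec r))
  have hφb : ∀ (r : ℝ) (x : S), |∫ y, (∫ z, f z ∂(κX r t y)) ∂(κY s r x)| ≤ Cf :=
    fun r x => abs_integral_le_of_abs_le' (fun y => hgb r y)
  have hYs : Measurable (Y s) := (hYad s hs0).mono le_rfl le_rfl |>.mono (ℱY.le s) le_rfl
  have hφYi : ∀ r : ℝ,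
      Integrable (fun ω => ∫ y, (∫ z, f z ∂(κX r t y)) ∂(κY s r (Y s ω))) μ :=
    fun r => integrable_of_abs_le' (((hφmeas r).comp hYs).aestronglyMeasurable)
      (fun ω => hφb r (Y s ω))
  have hcYi : ∀ r : ℝ,
      Integrable (fun ω => ∫ y, (D r y + aY r y) ∂(κY s r (Y s ω))) μ :=
    fun r => integrable_of_abs_le' (((hcmeas r).comp hYs).aestronglyMeasurable)
      (fun ω => hcb r (Y s ω))
  -- the bad set `A`
  set h₀ : Ω → ℝ := fun ω =>
    (∫ y, (∫ z, f z ∂(κX u t y)) ∂(κY s u (Y s ω))) - ∫ z, f z ∂(κX s t (Y s ω)) with hh₀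
  have hh₀m : Measurable[ℱY s] h₀ :=
    ((hφmeas u).comp (hYad s hs0)).sub ((hgm s).comp (hYad s hs0))
  set A : Set Ω := {ω | 0 < h₀ ω} with hA
  have hAmF : MeasurableSet[ℱY s] A := hh₀m measurableSet_Ioi
  have hAm : MeasurableSet A := ℱY.le s A hAmF
  have hA1 : ((μ.restrict A) univ).toReal ≤ 1 := by
    rw [Measure.restrict_apply_univ]
    calc (μ A).toReal ≤ (μ univ).toReal :=
          ENNReal.toReal_mono (measure_ne_top μ univ) (measure_mono (subset_univ A))
      _ = 1 := by simp
  -- derivative of `Ψ r = ∫_A φ (Y s ω) r`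
  have hΨder : ∀ r : ℝ, s ≤ r → r < t →
      HasDerivWithinAt (fun r' => ∫ ω in A, (∫ y, (∫ z, f z ∂(κX r' t y)) ∂(κY s r' (Y s ω))) ∂μ)
        (∫ ω in A, (∫ y, (D r y + aY r y) ∂(κY s r (Y s ω))) ∂μ) (Ici r) r := by
    intro r hsr hrt
    exact hasDerivWithinAt_integral_right' (μ.restrict A)
      (F := fun r' ω => ∫ y, (∫ z, f z ∂(κX r' t y)) ∂(κY s r' (Y s ω)))
      (c := fun ω => ∫ y, (D r y + aY r y) ∂(κY s r (Y s ω))) (L := CD + CaY)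
      hrt (fun r' _ => (hφYi r').restrict)
      (fun ω r' hr' => hφlip (Y s ω) r hsr hrt r' ⟨hr'.1.le, hr'.2⟩)
      (fun ω => hφder (Y s ω) r hsr hrt)
  -- Lipschitz continuity of `Ψ` on `[s,t]`
  have hΨcont : ContinuousOn
      (fun r => ∫ ω in A, (∫ y, (∫ z, f z ∂(κX r t y)) ∂(κY s r (Y s ω))) ∂μ) (Icc s t) := by
    have hlips : LipschitzOnWith (Real.toNNReal (CD + CaY))
        (fun r => ∫ ω in A, (∫ y, (∫ z, f z ∂(κX r t y)) ∂(κY s r (Y s ω))) ∂μ) (Icc s t) := by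
      rw [lipschitzOnWith_iff_dist_le_mul]
      have key : ∀ a ∈ Icc s t, ∀ b ∈ Icc s t, b ≤ a →
          dist (∫ ω in A, (∫ y, (∫ z, f z ∂(κX a t y)) ∂(κY s a (Y s ω))) ∂μ)
            (∫ ω in A, (∫ y, (∫ z, f z ∂(κX b t y)) ∂(κY s b (Y s ω))) ∂μ)
            ≤ (Real.toNNReal (CD + CaY) : ℝ) * dist a b := by
        intro a ha b hb hba
        rcases eq_or_lt_of_le hba with rfl | hlt
        · simp
        have hbt : b < t := lt_of_lt_of_le hlt ha.2
        have hsub : ∀ ω,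
            |(∫ y, (∫ z, f z ∂(κX a t y)) ∂(κY s a (Y s ω))) -
              ∫ y, (∫ z, f z ∂(κX b t y)) ∂(κY s b (Y s ω))| ≤ (CD + CaY) * (a - b) :=
          fun ω => hφlip (Y s ω) b hb.1 hbt a ⟨hlt.le, ha.2⟩
        rw [Real.dist_eq, Real.dist_eq, ← integral_sub (hφYi a).restrict (hφYi b).restrict]
        have h1 := norm_integral_le_of_norm_le_const (μ := μ.restrict A)
          (f := fun ω => (∫ y, (∫ z, f z ∂(κX a t y)) ∂(κY s a (Y s ω))) -
              ∫ y, (∫ z, f z ∂(κX b t y)) ∂(κY s b (Y s ω)))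
          (C := (CD + CaY) * (a - b))
          (Eventually.of_forall fun ω => by rw [Real.norm_eq_abs]; exact hsub ω)
        rw [Real.norm_eq_abs] at h1
        refine h1.trans ?_
        have hco : (Real.toNNReal (CD + CaY) : ℝ) = CD + CaY := Real.coe_toNNReal _ hL0
        rw [hco, abs_of_pos (by linarith : (0:ℝ) < a - b)]
        rw [measureReal_def]
        nlinarith [ENNReal.toReal_nonneg (a := (μ.restrict A) univ), hA1,
          mul_nonneg hL0 (by linarith : (0:ℝ) ≤ a - b)]
      intro a ha b hb
      rcases le_total b a with hba | hab
      · exact key a ha b hb hba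
      · rw [dist_comm, dist_comm a b]; exact key b hb a ha hab
    exact hlips.continuousOn
  -- the derivative is a.e. nonpositive on `(s,u)`
  have hCA0 : ∀ᵐ r ∂(volume.restrict (Ioo s u)),
      (∫ ω in A, (∫ y, (D r y + aY r y) ∂(κY s r (Y s ω))) ∂μ) ≤ 0 := by
    have hsubset : Ioo s u ⊆ Ico 0 t := fun r hr =>
      ⟨hs0.trans hr.1.le, lt_of_lt_of_le hr.2 hut⟩
    have hord' := ae_restrict_of_ae_restrict_of_subset hsubset hord
    filter_upwards [hord', ae_restrict_mem measurableSet_Ioo] with r hr hrmem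
    have hr0 : (0:ℝ) ≤ r := hs0.trans hrmem.1.le
    have hrt : r < t := lt_of_lt_of_le hrmem.2 hut
    have hYr : Measurable (Y r) := (hYad r hr0).mono (ℱY.le r) le_rfl
    set p : S → ℝ := fun y => max (aY r y - aX r y) 0 with hp
    have hpm : Measurable p := ((haYsec r).sub (haXsec r)).max measurable_const
    have hpb : ∀ y, |p y| ≤ CaY + CaX := by
      intro y
      have h1 : aY r y - aX r y ≤ CaY + CaX := by
        linarith [le_abs_self (aY r y), neg_abs_le (aX r y), hCaY r y, hCaX r y]
      rw [abs_le]
      constructor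
      · linarith [le_max_right (aY r y - aX r y) (0:ℝ), add_nonneg hCaY0 hCaX0]
      · exact max_le h1 (add_nonneg hCaY0 hCaX0)
    have hpi : Integrable (fun ω => p (Y r ω)) μ :=
      integrable_of_abs_le' ((hpm.comp hYr).aestronglyMeasurable) (fun ω => hpb (Y r ω))
    have hE1 : ∫ y, p y ∂(Measure.map (Y r) μ) = 0 := by
      have : ∀ᵐ y ∂(Measure.map (Y r) μ), p y = 0 := by
        filter_upwards [hr] with y hy
        simp only [hp]
        rw [max_eq_right (by linarith : aY r y - aX r y ≤ 0)]
      exact integral_eq_zero_of_ae this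
    have hE2 : ∫ ω, p (Y r ω) ∂μ = 0 := by
      rw [← integral_map hYr.aemeasurable hpm.aestronglyMeasurable]
      exact hE1
    have hE3 := hκY.2.2 p hpm ⟨CaY + CaX, hpb⟩ s r hs0 hrmem.1.le
    have hE4 : ∫ ω, (∫ y, p y ∂(κY s r (Y s ω))) ∂μ = 0 := by
      rw [← integral_congr_ae hE3, integral_condExp (ℱY.le s)]
      exact hE2
    have hpt : ∀ x : S,
        (∫ y, (D r y + aY r y) ∂(κY s r x)) ≤ ∫ y, p y ∂(κY s r x) := by
      intro x
      refine integral_mono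
        (integrable_of_abs_le' (((hDsec r).add (haYsec r)).aestronglyMeasurable)
          (fun y => (abs_add_le _ _).trans (add_le_add (hCD r y) (hCaY r y))))
        (integrable_of_abs_le' hpm.aestronglyMeasurable (fun y => hpb y)) ?_
      intro y
      show D r y + aY r y ≤ p y
      have h0 := hDaX r hr0 hrt y
      have heq : D r y + aY r y = aY r y - aX r y := by linarith
      rw [heq]
      exact le_max_left _ _
    have hκpm : Measurable fun x => ∫ y, p y ∂(κY s r x) :=
      measurable_kernel_integral' _ hpm
    have hκpi : Integrable (fun ω => ∫ y, p y ∂(κY s r (Y s ω))) μ :=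
      integrable_of_abs_le' ((hκpm.comp hYs).aestronglyMeasurable)
        (fun ω => abs_integral_le_of_abs_le' (fun y => hpb y))
    have hstep1 : (∫ ω in A, (∫ y, (D r y + aY r y) ∂(κY s r (Y s ω))) ∂μ)
        ≤ ∫ ω in A, (∫ y, p y ∂(κY s r (Y s ω))) ∂μ :=
      integral_mono ((hcYi r).restrict) (hκpi.restrict) (fun ω => hpt (Y s ω))
    have hstep2 : (∫ ω in A, (∫ y, p y ∂(κY s r (Y s ω))) ∂μ)
        ≤ ∫ ω, (∫ y, p y ∂(κY s r (Y s ω))) ∂μ :=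
      setIntegral_le_integral hκpi (Eventually.of_forall fun ω =>
        integral_nonneg (fun y => le_max_right _ _))
    linarith
  -- bound on the derivative
  have hCAb : ∀ r : ℝ,
      |∫ ω in A, (∫ y, (D r y + aY r y) ∂(κY s r (Y s ω))) ∂μ| ≤ CD + CaY := by
    intro r
    have h1 := norm_integral_le_of_norm_le_const (μ := μ.restrict A)
      (f := fun ω => ∫ y, (D r y + aY r y) ∂(κY s r (Y s ω))) (C := CD + CaY)
      (Eventually.of_forall fun ω => by rw [Real.norm_eq_abs]; exact hcb r (Y s ω))
    rw [Real.norm_eq_abs] at h1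
    refine h1.trans ?_
    rw [measureReal_def]
    nlinarith [ENNReal.toReal_nonneg (a := (μ.restrict A) univ), hA1]
  -- a.e. measurability of the derivative on `(s,u)`
  have hCAmeas : AEMeasurable
      (fun r => ∫ ω in A, (∫ y, (D r y + aY r y) ∂(κY s r (Y s ω))) ∂μ)
      (volume.restrict (Ioo s u)) :=
    aemeasurable_right_deriv' hst hut hΨcont
      (fun r hr => (hΨder r hr.1.le (lt_of_lt_of_le hr.2 hut)).mono Ioi_subset_Ici_self)
  -- conclude `Ψ u ≤ Ψ s`
  have hΨle : (∫ ω in A, (∫ y, (∫ z, f z ∂(κX u t y)) ∂(κY s u (Y s ω))) ∂μ)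
      ≤ ∫ ω in A, (∫ y, (∫ z, f z ∂(κX s t y)) ∂(κY s s (Y s ω))) ∂μ :=
    le_of_right_deriv_nonpos' hsu (hΨcont.mono (Icc_subset_Icc le_rfl hut))
      (fun r hr => (hΨder r hr.1.le (lt_of_lt_of_le hr.2 hut)).mono Ioi_subset_Ici_self)
      hCAmeas (fun r _ => hCAb r) hCA0
  -- identify `Ψ s`
  have hΨs : (∫ ω in A, (∫ y, (∫ z, f z ∂(κX s t y)) ∂(κY s s (Y s ω))) ∂μ)
      = ∫ ω in A, (∫ z, f z ∂(κX s t (Y s ω))) ∂μ := by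
    refine integral_congr_ae (Eventually.of_forall fun ω => ?_)
    simp only
    rw [hκY.1 s hs0 (Y s ω)]
    exact integral_dirac' _ _ ((hgm s).stronglyMeasurable)
  -- the bad set is null
  have hAzero : μ A = 0 := by
    by_contra hne
    have hpos : 0 < μ A := lt_of_le_of_ne zero_le (Ne.symm hne)
    have hnonneg : 0 ≤ᵐ[μ.restrict A] h₀ := by
      filter_upwards [ae_restrict_mem hAm] with ω hω using le_of_lt hω
    have hioA : IntegrableOn h₀ A μ := ((hφYi u).sub (part1 s hs0 hst).1).restrict
    have hiff := setIntegral_pos_iff_support_of_nonneg_ae hnonneg hioA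
    have hsupp : Function.support h₀ ∩ A = A := by
      refine inter_eq_right.mpr ?_
      intro ω hω
      exact ne_of_gt hω
    have hposint : 0 < ∫ ω in A, h₀ ω ∂μ := hiff.2 (by rw [hsupp]; exact hpos)
    have hle0 : (∫ ω in A, h₀ ω ∂μ) ≤ 0 := by
      rw [hh₀, integral_sub ((hφYi u).restrict) ((part1 s hs0 hst).1.restrict)]
      linarith [hΨle, hΨs]
    linarith
  have hfinal : ∀ᵐ ω ∂μ,
      (∫ y, (∫ z, f z ∂(κX u t y)) ∂(κY s u (Y s ω))) ≤ ∫ z, f z ∂(κX s t (Y s ω)) := by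
    have h5 : ∀ᵐ ω ∂μ, ω ∉ A := by
      rw [ae_iff]
      have hset : {ω | ¬ ω ∉ A} = A := by ext ω; simp
      rw [hset]
      exact hAzero
    filter_upwards [h5] with ω hω
    have : ¬ (0 < h₀ ω) := hω
    rw [hh₀] at this
    simp only [not_lt] at this
    linarith [this]
  -- Markov property and conclusion
  have hmarkov : μ[(fun ω => ∫ y, f y ∂(κX u t (Y u ω))) | ℱY s] =ᵐ[μ]
      fun ω => ∫ y, (∫ z, f z ∂(κX u t y)) ∂(κY s u (Y s ω)) :=
    hκY.2.2 (fun y => ∫ z, f z ∂(κX u t y)) (hgm u) ⟨Cf, fun y => hgb u y⟩ s u hs0 hsu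
  filter_upwards [hmarkov, hfinal] with ω h1 h2
  exact le_of_eq_of_le h1 h2
end

section
/- (Reverse comparison; submartingale case.) Fix t > 0 and a bounded measurable f : S → ℝ. Suppose X has transition kernels (κ^X_{s,r}) with respect to (ℱ^X_s) and Y has transition kernels (κ^Y_{s,r}) with respect to (ℱ^Y_s), and X_0 = Y_0 = x₀ P-a.s. for some x₀ ∈ S. Let g(s,x) := ∫ f(y) κ^X_{s,t}(x,dy) for 0 ≤ s ≤ t and assume g is jointly measurable. Assume there exist jointly measurable bounded D, aX, aY : [0,t] × S → ℝ such that for every x ∈ S and every 0 ≤ s ≤ t: (i) the map r ↦ ∫ g(r,y) κ^X_{s,r}(x,dy) has right derivative ∫ (D(r,y) + aX(r,y)) κ^X_{s,r}(x,dy) at every r ∈ [s,t); (ii) the map r ↦ ∫ g(r,y) κ^Y_{s,r}(x,dy) is continuous on [s,t] and has right derivative ∫ (D(r,y) + aY(r,y)) κ^Y_{s,r}(x,dy) at every r ∈ [s,t). If for Lebesgue-a.e. u ∈ [0,t) the inequality aX(u,·) ≤ aY(u,·) holds (P ∘ Y_u⁻¹)-almost surely, then the linking process s ↦ g(s, Y_s),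 0 ≤ s ≤ t, is a submartingale with respect to (ℱ^Y_s) and P, and E[f(Y_t)] ≥ E[f(X_t)]. -/
/-!
Chapman–Kolmogorov makes `r' ↦ T^X_{r,r'} g(r', ·)` constant on `[r, t]`, so its right derivative
at `r' = r` vanishes: `D + aX = 0` on `[0, t) × S`. Hence, for fixed `s` and `x`, the map
`r ↦ ∫ g(r, ·) dκ^Y_{s,r}(x)` has right derivative `∫ (aY - aX)(r, ·) dκ^Y_{s,r}(x)`. Since
`κ^Y_{s,r}` carries the law of `Y_s` to that of `Y_r`, this derivative is nonnegative for a.e. `r`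
and `P ∘ Y_s⁻¹`-a.e. `x`; swapping the two a.e. quantifiers needs joint measurability in `(r, x)`,
which holds because a right derivative is a pointwise limit of difference quotients. Integrating
it gives `g(s, Y_s) ≤ E[g(u, Y_u) | ℱ^Y_s]`, and taking expectations between `0` and `t`, with
`X_0 = Y_0 = x₀` and `g(t, ·) = f`, gives `E f(X_t) ≤ E f(Y_t)`.
-/

open Set Filter Topology MeasureTheory ProbabilityTheory

lemma abs_integral_le_of_forall_abs_le {α : Type*} [MeasurableSpace α] {ν : Measure α}
    [IsProbabilityMeasure ν] {h : α → ℝ} {C : ℝ} (hC : ∀ z, |h z| ≤ C) :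
    |∫ z, h z ∂ν| ≤ C := by
  simpa using norm_integral_le_of_norm_le_const (μ := ν) (f := h) (ae_of_all _ hC)

lemma tendsto_slope_nat_of_hasDerivWithinAt_Ici {f : ℝ → ℝ} {f' r : ℝ}
    (hf : HasDerivWithinAt f f' (Ici r) r) :
    Tendsto (fun n : ℕ => (f (r + 1 / ((n : ℝ) + 1)) - f r) * ((n : ℝ) + 1)) atTop (𝓝 f') := by
  have hseq : Tendsto (fun n : ℕ => r + 1 / ((n : ℝ) + 1)) atTop (𝓝[Ioi r] r) := by
    refine tendsto_nhdsWithin_iff.2 ⟨?_, Eventually.of_forall fun n => ?_⟩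
    · simpa using tendsto_one_div_add_atTop_nhds_zero_nat.const_add r
    · simp only [mem_Ioi, lt_add_iff_pos_right]; positivity
  refine ((hasDerivWithinAt_iff_tendsto_slope' self_notMem_Ioi).1
    (hf.mono Ioi_subset_Ici_self)).comp hseq |>.congr fun n => ?_
  simp only [Function.comp_apply, slope_def_field, add_sub_cancel_left]
  field_simp

lemma measurable_indicator_of_hasDerivWithinAt_Ici {α : Type*} [MeasurableSpace α]
    {F G : ℝ → α → ℝ} {a b : ℝ} (hab : a ≤ b)
    (hFc : ∀ x, ContinuousOn (F · x) (Icc a b)) (hFm : ∀ r ∈ Icc a b, Measurable (F r))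
    (hG : ∀ x, ∀ r ∈ Ico a b, HasDerivWithinAt (F · x) (G r x) (Ici r) r) :
    Measurable ((Ico a b ×ˢ univ).indicator (Function.uncurry G)) := by
  set F' : ℝ → α → ℝ := fun r => F (projIcc a b hab r)
  have hF' : Measurable (Function.uncurry F') :=
    measurable_uncurry_of_continuous_of_measurable
      (fun x => (hFc x).comp_continuous (continuous_subtype_val.comp continuous_projIcc)
        fun r => (projIcc a b hab r).2)
      fun r => hFm _ (projIcc a b hab r).2
  have hF'G : ∀ x, ∀ r ∈ Ico a b, HasDerivWithinAt (F' · x) (G r x) (Ici r) r := by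
    intro x r hr
    refine (hG x r hr).congr_of_eventuallyEq ?_
      (by simp [F', projIcc_of_mem hab (Ico_subset_Icc_self hr)])
    filter_upwards [Icc_mem_nhdsGE hr.2] with r' hr'
    simp [F', projIcc_of_mem hab ⟨hr.1.trans hr'.1, hr'.2⟩]
  refine measurable_of_tendsto_metrizable (f := fun n : ℕ => (Ico a b ×ˢ univ).indicator
      fun p : ℝ × α => (F' (p.1 + 1 / ((n : ℝ) + 1)) p.2 - F' p.1 p.2) * ((n : ℝ) + 1))
    (fun n => ?_) (tendsto_pi_nhds.2 fun p => ?_)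
  · refine Measurable.indicator ?_ (measurableSet_Ico.prod MeasurableSet.univ)
    exact ((hF'.comp ((measurable_fst.add_const _).prodMk measurable_snd)).sub hF').mul
      measurable_const
  · by_cases hp : p ∈ Ico a b ×ˢ univ
    · simp only [indicator_of_mem hp]
      exact tendsto_slope_nat_of_hasDerivWithinAt_Ici (hF'G p.2 p.1 hp.1)
    · simp only [indicator_of_notMem hp]
      exact tendsto_const_nhds

lemma le_of_hasDerivWithinAt_Ioi_of_ae_nonneg {φ φ' : ℝ → ℝ} {a b : ℝ} (hab : a ≤ b)
    (hφ : ContinuousOn φ (Icc a b)) (hφ' : ∀ r ∈ Ioo a b, HasDerivWithinAt φ (φ' r) (Ioi r) r)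
    (hint : IntervalIntegrable φ' volume a b) (hnn : ∀ᵐ r ∂volume.restrict (Ioo a b), 0 ≤ φ' r) :
    φ a ≤ φ b := by
  have hFTC := intervalIntegral.integral_eq_sub_of_hasDeriv_right_of_le hab hφ hφ' hint
  have : 0 ≤ ∫ r in a..b, φ' r := by
    rw [intervalIntegral.integral_of_le hab, Measure.restrict_congr_set Ioo_ae_eq_Ioc.symm]
    exact setIntegral_nonneg_of_ae_restrict hnn
  linarith

namespace IsTransitionKernels

variable {S Ω : Type*} [MeasurableSpace S] {mΩ : MeasurableSpace Ω} {μ : Measure Ω}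
  {ℱ : Filtration ℝ mΩ} {X : ℝ → Ω → S} {κ : ℝ → ℝ → Kernel S S}

lemma integral_self (hκ : IsTransitionKernels μ ℱ X κ) {s : ℝ} (hs : 0 ≤ s) {h : S → ℝ}
    (hh : Measurable h) (x : S) : ∫ y, h y ∂(κ s s x) = h x := by
  rw [hκ.1 s hs x, integral_dirac' _ _ hh.stronglyMeasurable]

lemma integral_comp_eq [IsFiniteMeasure μ] (hκ : IsTransitionKernels μ ℱ X κ) {h : S → ℝ}
    (hh : Measurable h) (hhb : ∃ C, ∀ z, |h z| ≤ C) {s t : ℝ} (hs : 0 ≤ s) (hst : s ≤ t) :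
    ∫ ω, h (X t ω) ∂μ = ∫ ω, ∫ y, h y ∂(κ s t (X s ω)) ∂μ := by
  rw [← integral_condExp (ℱ.le s), integral_congr_ae (hκ.2.2 h hh hhb s t hs hst)]

lemma map_eq_comp [IsFiniteMeasure μ] (hκ : IsTransitionKernels μ ℱ X κ) {s r : ℝ}
    [IsFiniteKernel (κ s r)] (hs : 0 ≤ s) (hsr : s ≤ r) (hXs : Measurable (X s))
    (hXr : Measurable (X r)) : μ.map (X r) = κ s r ∘ₘ μ.map (X s) := by
  ext B hB
  have hκB : Measurable fun x => κ s r x B := (κ s r).measurable_coe hB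
  have h := hκ.integral_comp_eq (h := B.indicator 1) (measurable_const.indicator hB)
    ⟨1, fun z => by by_cases hz : z ∈ B <;> simp [hz]⟩ hs hsr
  rw [← ENNReal.toReal_eq_toReal_iff' (measure_ne_top _ _) (measure_ne_top _ _),
    Measure.map_apply hXr hB, Measure.bind_apply hB (κ s r).aemeasurable, lintegral_map hκB hXs,
    ← integral_toReal (f := fun ω => κ s r (X s ω) B) (hκB.comp hXs).aemeasurable
      (ae_of_all _ fun ω => measure_lt_top _ _)]
  simpa only [← indicator_comp_right, Pi.one_comp, integral_indicator_one hB,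
    integral_indicator_one (hXr hB), measureReal_def] using h

lemma ae_ae_of_ae_map [IsFiniteMeasure μ] (hκ : IsTransitionKernels μ ℱ X κ) {s r : ℝ}
    [IsFiniteKernel (κ s r)] (hs : 0 ≤ s) (hsr : s ≤ r) (hXs : Measurable (X s))
    (hXr : Measurable (X r)) {p : S → Prop} (hp : ∀ᵐ y ∂(μ.map (X r)), p y) :
    ∀ᵐ ω ∂μ, ∀ᵐ y ∂(κ s r (X s ω)), p y := by
  rw [hκ.map_eq_comp hs hsr hXs hXr] at hp
  exact ae_of_ae_map hXs.aemeasurable (Measure.ae_ae_of_ae_comp hp)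

lemma eq_zero_of_hasDerivWithinAt (hκ : IsTransitionKernels μ ℱ X κ) {f : S → ℝ}
    (hf : Measurable f) (hfb : ∃ C, ∀ z, |f z| ≤ C) {r t : ℝ} (hr : 0 ≤ r) (hrt : r < t)
    {a : S → ℝ} (ha : Measurable a) {x : S}
    (hd : HasDerivWithinAt (fun r' => ∫ y, (∫ z, f z ∂(κ r' t y)) ∂(κ r r' x))
      (∫ y, a y ∂(κ r r x)) (Ici r) r) :
    a x = 0 := by
  have hconst : HasDerivWithinAt (fun r' => ∫ y, (∫ z, f z ∂(κ r' t y)) ∂(κ r r' x)) 0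
      (Ici r) r := by
    refine (hasDerivWithinAt_const r (Ici r) (∫ z, f z ∂(κ r t x))).congr_of_eventuallyEq ?_
      (hκ.2.1 f hf hfb r r t hr le_rfl hrt.le x)
    filter_upwards [Icc_mem_nhdsGE hrt] with r' hr'
    exact hκ.2.1 f hf hfb r r' t hr hr'.1 hr'.2 x
  rw [← hκ.integral_self hr ha x]
  exact ((uniqueDiffOn_Ici r).uniqueDiffWithinAt self_mem_Ici).eq_deriv _ hd hconst

lemma ae_le_integral_of_hasDerivWithinAt [IsFiniteMeasure μ] [∀ s r, IsMarkovKernel (κ s r)]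
    (hκ : IsTransitionKernels μ ℱ X κ) {s t : ℝ} (hs : 0 ≤ s)
    (hX : ∀ r ∈ Icc s t, Measurable (X r)) {g c : ℝ → S → ℝ} (hg : ∀ r, Measurable (g r))
    {C : ℝ} (hcb : ∀ r y, |c r y| ≤ C)
    (hcont : ∀ x, ContinuousOn (fun r => ∫ y, g r y ∂(κ s r x)) (Icc s t))
    (hderiv : ∀ x, ∀ r ∈ Ico s t,
      HasDerivWithinAt (fun r' => ∫ y, g r' y ∂(κ s r' x)) (∫ y, c r y ∂(κ s r x)) (Ici r) r)
    (hc : ∀ᵐ r ∂(volume.restrict (Ico s t)), ∀ᵐ y ∂(μ.map (X r)), 0 ≤ c r y)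
    {u : ℝ} (hsu : s ≤ u) (hut : u ≤ t) :
    ∀ᵐ ω ∂μ, g s (X s ω) ≤ ∫ y, g u y ∂(κ s u (X s ω)) := by
  have hst := hsu.trans hut
  set G : ℝ → S → ℝ := fun r x => ∫ y, c r y ∂(κ s r x)
  set H := (Ico s t ×ˢ univ).indicator (Function.uncurry G)
  have hXs := hX s (left_mem_Icc.2 hst)
  have hH : Measurable H := measurable_indicator_of_hasDerivWithinAt_Ici hst hcont
    (fun r _ => ((hg r).stronglyMeasurable.integral_kernel (κ := κ s r)).measurable) hderiv
  have hHG : ∀ x, ∀ r ∈ Ico s t, H (r, x) = G r x := fun x r hr =>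
    indicator_of_mem (mk_mem_prod hr (mem_univ x)) _
  have hpos : ∀ᵐ ω ∂μ, ∀ᵐ r ∂(volume.restrict (Ico s t)), 0 ≤ H (r, X s ω) := by
    rw [Measure.ae_ae_comm (p := fun ω r => 0 ≤ H (r, X s ω)) (measurableSet_le measurable_const
      (hH.comp (measurable_snd.prodMk (hXs.comp measurable_fst))))]
    filter_upwards [hc, ae_restrict_mem measurableSet_Ico] with r hr hrst
    filter_upwards [hκ.ae_ae_of_ae_map hs hrst.1 hXs (hX r (Ico_subset_Icc_self hrst)) hr]
      with ω hω
    rw [hHG _ r hrst]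
    exact integral_nonneg_of_ae hω
  filter_upwards [hpos] with ω hω
  set x := X s ω
  rw [← hκ.integral_self hs (hg s) x]
  refine le_of_hasDerivWithinAt_Ioi_of_ae_nonneg (φ' := fun r => H (r, x)) hsu
    ((hcont x).mono (Icc_subset_Icc_right hut)) (fun r hr => ?_) ?_
    (ae_restrict_of_ae_restrict_of_subset
      (Ioo_subset_Ico_self.trans (Ico_subset_Ico_right hut)) hω)
  · have hr' : r ∈ Ico s t := ⟨hr.1.le, hr.2.trans_le hut⟩
    rw [hHG x r hr']
    exact (hderiv x r hr').mono Ioi_subset_Ici_self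
  · refine (intervalIntegrable_const (c := C)).mono_fun'
      (hH.comp (measurable_id.prodMk measurable_const)).aestronglyMeasurable
      (ae_of_all _ fun r => (norm_indicator_le_norm_self _ _).trans ?_)
    exact abs_integral_le_of_forall_abs_le (hcb r)

lemma ae_le_condExp_of_hasDerivWithinAt [IsFiniteMeasure μ] [∀ s r, IsMarkovKernel (κ s r)]
    (hκ : IsTransitionKernels μ ℱ X κ) {s t : ℝ} (hs : 0 ≤ s)
    (hX : ∀ r ∈ Icc s t, Measurable (X r)) {g c : ℝ → S → ℝ} (hg : ∀ r, Measurable (g r))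
    {C : ℝ} (hcb : ∀ r y, |c r y| ≤ C)
    (hcont : ∀ x, ContinuousOn (fun r => ∫ y, g r y ∂(κ s r x)) (Icc s t))
    (hderiv : ∀ x, ∀ r ∈ Ico s t,
      HasDerivWithinAt (fun r' => ∫ y, g r' y ∂(κ s r' x)) (∫ y, c r y ∂(κ s r x)) (Ici r) r)
    (hc : ∀ᵐ r ∂(volume.restrict (Ico s t)), ∀ᵐ y ∂(μ.map (X r)), 0 ≤ c r y)
    {u : ℝ} (hsu : s ≤ u) (hut : u ≤ t) (hgu : ∃ C, ∀ y, |g u y| ≤ C) :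
    (fun ω => g s (X s ω)) ≤ᵐ[μ] μ[fun ω => g u (X u ω) | ℱ s] := by
  filter_upwards [hκ.ae_le_integral_of_hasDerivWithinAt hs hX hg hcb hcont hderiv hc hsu hut,
    hκ.2.2 (g u) (hg u) hgu s u hs hsu] with ω hle heq
  rwa [heq]

end IsTransitionKernels

/-- Reverse comparison, submartingale case (Remark 2.11): if the generator comparison
is reversed, `aX ≤ aY`, then the linking process `s ↦ g(s, Y_s) = T^X_{s,t} f (Y_s)` is a
submartingale on `[0,t]` w.r.t. `(ℱ^Y_s)` and `E[f(Y_t)] ≥ E[f(X_t)]`. -/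
theorem reverse_comparison_submartingale
    {S Ω : Type*} [MeasurableSpace S] {mΩ : MeasurableSpace Ω}
    (μ : Measure Ω) [IsProbabilityMeasure μ] (ℱX ℱY : Filtration ℝ mΩ)
    (X Y : ℝ → Ω → S)
    (hXad : ∀ s : ℝ, 0 ≤ s → Measurable[ℱX s] (X s))
    (hYad : ∀ s : ℝ, 0 ≤ s → Measurable[ℱY s] (Y s))
    (κX κY : ℝ → ℝ → Kernel S S)
    [∀ s r : ℝ, IsMarkovKernel (κX s r)] [∀ s r : ℝ, IsMarkovKernel (κY s r)]
    (hκX : IsTransitionKernels μ ℱX X κX) (hκY : IsTransitionKernels μ ℱY Y κY)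
    (t : ℝ) (ht : 0 < t)
    (f : S → ℝ) (hf : Measurable f) (hfb : ∃ C, ∀ z, |f z| ≤ C)
    (x₀ : S) (hx₀ : ∀ᵐ ω ∂μ, X 0 ω = x₀ ∧ Y 0 ω = x₀)
    (hg : Measurable (Function.uncurry fun s x => ∫ y, f y ∂(κX s t x)))
    (D aX aY : ℝ → S → ℝ)
    (hDm : Measurable (Function.uncurry D)) (hDb : ∃ C, ∀ u z, |D u z| ≤ C)
    (haXm : Measurable (Function.uncurry aX)) (haXb : ∃ C, ∀ u z, |aX u z| ≤ C)
    (haYm : Measurable (Function.uncurry aY)) (haYb : ∃ C, ∀ u z, |aY u z| ≤ C)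
    (hgenX : ∀ (x : S) (s : ℝ), 0 ≤ s → s ≤ t → ∀ r : ℝ, s ≤ r → r < t →
      HasDerivWithinAt
        (fun r' => ∫ y, (∫ z, f z ∂(κX r' t y)) ∂(κX s r' x))
        (∫ y, (D r y + aX r y) ∂(κX s r x)) (Ici r) r)
    (hgenY : ∀ (x : S) (s : ℝ), 0 ≤ s → s ≤ t →
      ContinuousOn (fun r => ∫ y, (∫ z, f z ∂(κX r t y)) ∂(κY s r x)) (Icc s t) ∧
      ∀ r : ℝ, s ≤ r → r < t →
        HasDerivWithinAt
          (fun r' => ∫ y, (∫ z, f z ∂(κX r' t y)) ∂(κY s r' x))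
          (∫ y, (D r y + aY r y) ∂(κY s r x)) (Ici r) r)
    (hord : ∀ᵐ u ∂(volume.restrict (Ico (0:ℝ) t)),
      ∀ᵐ x ∂(Measure.map (Y u) μ), aX u x ≤ aY u x) :
    ((∀ s : ℝ, 0 ≤ s → s ≤ t →
      Integrable (fun ω => ∫ y, f y ∂(κX s t (Y s ω))) μ ∧
      StronglyMeasurable[ℱY s] (fun ω => ∫ y, f y ∂(κX s t (Y s ω)))) ∧
    (∀ s u : ℝ, 0 ≤ s → s ≤ u → u ≤ t →
      (fun ω => ∫ y, f y ∂(κX s t (Y s ω)))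
        ≤ᵐ[μ] μ[(fun ω => ∫ y, f y ∂(κX u t (Y u ω))) | ℱY s])) ∧
    ∫ ω, f (X t ω) ∂μ ≤ ∫ ω, f (Y t ω) ∂μ := by
  obtain ⟨Cf, hCf⟩ := hfb
  obtain ⟨CD, hCD⟩ := hDb
  obtain ⟨CY, hCY⟩ := haYb
  set g : ℝ → S → ℝ := fun s x => ∫ y, f y ∂(κX s t x)
  have hgm : ∀ s, Measurable (g s) := fun s =>
    (hf.stronglyMeasurable.integral_kernel (κ := κX s t)).measurable
  have hgb : ∀ s x, |g s x| ≤ Cf := fun s x => abs_integral_le_of_forall_abs_le hCf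
  have hYm : ∀ s, 0 ≤ s → Measurable (Y s) := fun s hs => (hYad s hs).mono (ℱY.le s) le_rfl
  have hgY : ∀ s, 0 ≤ s → Integrable (fun ω => g s (Y s ω)) μ := fun s hs =>
    .of_bound ((hgm s).comp (hYm s hs)).aestronglyMeasurable Cf
      (ae_of_all _ fun ω => hgb s (Y s ω))
  have hDaX : ∀ r, 0 ≤ r → r < t → ∀ y, D r y + aX r y = 0 := fun r hr hrt y =>
    hκX.eq_zero_of_hasDerivWithinAt hf ⟨Cf, hCf⟩ hr hrt
      ((hDm.comp measurable_prodMk_left).add (haXm.comp measurable_prodMk_left))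
      (hgenX y r hr hrt.le r le_rfl hrt)
  have hsub : ∀ s u, 0 ≤ s → s ≤ u → u ≤ t →
      (fun ω => g s (Y s ω)) ≤ᵐ[μ] μ[fun ω => g u (Y u ω) | ℱY s] := by
    intro s u hs hsu hut
    have hc : ∀ᵐ r ∂(volume.restrict (Ico s t)), ∀ᵐ y ∂(μ.map (Y r)), 0 ≤ D r y + aY r y := by
      filter_upwards [ae_restrict_of_ae_restrict_of_subset (Ico_subset_Ico_left hs) hord,
        ae_restrict_mem measurableSet_Ico] with r hr hrst
      filter_upwards [hr] with y hy
      linarith [hDaX r (hs.trans hrst.1) hrst.2 y]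
    exact hκY.ae_le_condExp_of_hasDerivWithinAt hs (fun r hr => hYm r (hs.trans hr.1)) hgm
      (fun r y => (abs_add_le _ _).trans (add_le_add (hCD r y) (hCY r y)))
      (fun x => (hgenY x s hs (hsu.trans hut)).1)
      (fun x r hr => (hgenY x s hs (hsu.trans hut)).2 r hr.1 hr.2) hc hsu hut ⟨Cf, hgb u⟩
  refine ⟨⟨fun s hs _ => ⟨hgY s hs, ((hgm s).comp (hYad s hs)).stronglyMeasurable⟩, hsub⟩, ?_⟩
  calc ∫ ω, f (X t ω) ∂μ = ∫ ω, g 0 (X 0 ω) ∂μ := hκX.integral_comp_eq hf ⟨Cf, hCf⟩ le_rfl ht.le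
    _ = g 0 x₀ := by rw [integral_congr_ae (hx₀.mono fun ω h => congrArg (g 0) h.1)]; simp
    _ = ∫ ω, g 0 (Y 0 ω) ∂μ := by
      rw [integral_congr_ae (hx₀.mono fun ω h => congrArg (g 0) h.2)]; simp
    _ ≤ ∫ ω, μ[fun ω => g t (Y t ω) | ℱY 0] ω ∂μ :=
      integral_mono_ae (hgY 0 le_rfl) integrable_condExp (hsub 0 t le_rfl ht.le le_rfl)
    _ = ∫ ω, g t (Y t ω) ∂μ := integral_condExp (ℱY.le 0)
    _ = ∫ ω, f (Y t ω) ∂μ := by simp only [g, hκX.integral_self ht.le hf]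
end
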